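/- arXiv:1404.6281 — 12 statements merged into one kernel-verified Lean document; each statement's English description precedes it below -/
import Mathlib

section
/- Let F_q be a finite field, let n and t be positive integers, and let a ∈ F_q^*. The binomial x^t − a ∈ F_q[x] divides x^n − 1 if and only if t divides n and ord_q(a) divides gcd(q − 1, n/t). -/
open Polynomial

/-- The binomial `x^t - a` divides `x^n - 1` over `F_q` iff `t ∣ n` and
`ord_q(a) ∣ gcd(q - 1, n / t)`. -/
theorem binomial_divides_xn_sub_one_iff {F : Type*} [Field F] [Fintype F]
    (q : ℕ) (hq : q = Fintype.card F) (n t : ℕ) (hn : 0 < n) (ht : 0 < t)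
    (a : F) (ha : a ≠ 0) :
    (X ^ t - C a) ∣ (X ^ n - 1 : Polynomial F) ↔
      t ∣ n ∧ orderOf a ∣ Nat.gcd (q - 1) (n / t) := by
  have hcard : orderOf a ∣ q - 1 := by
    subst hq
    exact orderOf_dvd_of_pow_eq_one (FiniteField.pow_card_sub_one_eq_one a ha)
  set s := n / t with hs
  set r := n % t with hr
  have hn' : n = t * s + r := (Nat.div_add_mod n t).symm
  have hrt : r < t := Nat.mod_lt n ht
  have key : (X ^ t - C a) ∣ (X ^ n - 1 : Polynomial F) ↔
      (X ^ t - C a) ∣ (C (a ^ s) * X ^ r - 1 : Polynomial F) := by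
    have hdecomp : (X ^ n - 1 : Polynomial F)
        = X ^ r * ((X ^ t) ^ s - (C a) ^ s) + (C (a ^ s) * X ^ r - 1) := by
      rw [hn', C_pow]; ring
    have hdvd : (X ^ t - C a) ∣ (X ^ r * ((X ^ t) ^ s - (C a) ^ s) : Polynomial F) :=
      Dvd.dvd.mul_left (sub_dvd_pow_sub_pow _ _ s) _
    rw [hdecomp]
    exact dvd_add_right hdvd
  rw [key]
  constructor
  · intro h
    have hdegt : (X ^ t - C a : Polynomial F).degree = t := degree_X_pow_sub_C ht a
    have hdeglt : (C (a ^ s) * X ^ r - 1 : Polynomial F).degree < (X ^ t - C a).degree := by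
      rw [hdegt]
      refine lt_of_le_of_lt (degree_sub_le _ _) ?_
      rw [max_lt_iff]
      constructor
      · exact lt_of_le_of_lt (degree_C_mul_X_pow_le r _)
          (by exact_mod_cast Nat.cast_lt.mpr hrt)
      · exact lt_of_le_of_lt degree_one_le
          (by exact_mod_cast Nat.cast_lt.mpr ht)
    have hz : (C (a ^ s) * X ^ r - 1 : Polynomial F) = 0 :=
      eq_zero_of_dvd_of_degree_lt h hdeglt
    have hr0 : r = 0 := by
      by_contra hr0
      have := congrArg (fun p => Polynomial.coeff p 0) hz
      simp only [coeff_sub, coeff_one, coeff_C_mul, coeff_X_pow, coeff_zero] at this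
      rw [if_neg (fun h => hr0 h.symm)] at this
      simp at this
    have has : a ^ s = 1 := by
      rw [hr0, pow_zero, mul_one, sub_eq_zero, ← C_1, C_inj] at hz
      exact hz
    refine ⟨Nat.dvd_of_mod_eq_zero hr0, Nat.dvd_gcd hcard ?_⟩
    exact orderOf_dvd_of_pow_eq_one has
  · rintro ⟨htn, hord⟩
    have hr0 : r = 0 := by
      obtain ⟨k, rfl⟩ := htn
      rw [hr]; exact Nat.mul_mod_right t k
    have has : a ^ s = 1 :=
      orderOf_dvd_iff_pow_eq_one.mp (hord.trans (Nat.gcd_dvd_right _ _))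
    rw [hr0, has]
    simp
end

section
/- Let F_q be a finite field, let t ≥ 2 be an integer, and let a ∈ F_q^*. The binomial x^t − a is irreducible in F_q[x] if and only if the following three conditions hold: (1) rad(t) divides ord_q(a); (2) gcd(t, (q − 1)/ord_q(a)) = 1; (3) if 4 divides t, then q ≡ 1 (mod 4). -/
open Polynomial

private lemma geom_fact (q d : ℕ) (hq : 1 ≤ q) :
    q ^ d - 1 = (q - 1) * ∑ i ∈ Finset.range d, q ^ i := by
  induction d with
  | zero => simp
  | succ d ih =>
    have h1 : 1 ≤ q ^ d := Nat.one_le_pow _ _ hq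
    have h2 : q ^ d ≤ q ^ (d + 1) := Nat.pow_le_pow_right hq (by omega)
    have h3 : (q - 1) * q ^ d = q ^ (d + 1) - q ^ d := by
      rw [Nat.sub_mul, one_mul, ← pow_succ']
    rw [Finset.sum_range_succ, Nat.mul_add, ← ih, h3]
    omega

private lemma v2_of_mod_four_eq_two {n : ℕ} (h : n % 4 = 2) : padicValNat 2 n = 1 := by
  haveI : Fact (Nat.Prime 2) := ⟨Nat.prime_two⟩
  obtain ⟨m, hm, hmodd⟩ : ∃ m, n = 2 * m ∧ m % 2 = 1 := ⟨n / 2, by omega, by omega⟩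
  subst hm
  rw [padicValNat.mul (by norm_num) (by omega), padicValNat.self (by norm_num),
    padicValNat.eq_zero_of_not_dvd (by omega)]

private lemma v2_pow_sub_one_of_odd {q d : ℕ} (hq : q % 2 = 1) (h2 : 2 ≤ q) (hd : d % 2 = 1) :
    padicValNat 2 (q ^ d - 1) = padicValNat 2 (q - 1) := by
  haveI : Fact (Nat.Prime 2) := ⟨Nat.prime_two⟩
  have hS : (∑ i ∈ Finset.range d, q ^ i) % 2 = 1 := by
    have h := Finset.sum_nat_mod (Finset.range d) 2 (fun i => q ^ i)
    have h2' : (∑ i ∈ Finset.range d, q ^ i % 2) = d := by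
      rw [Finset.sum_congr rfl (fun i _ => show q ^ i % 2 = 1 by rw [Nat.pow_mod, hq, one_pow]; rfl)]
      simp
    rw [h2'] at h
    omega
  have hSv : padicValNat 2 (∑ i ∈ Finset.range d, q ^ i) = 0 :=
    padicValNat.eq_zero_of_not_dvd (by omega)
  rw [geom_fact q d (by omega), padicValNat.mul (by omega) (by omega), hSv, add_zero]

private lemma crux {q e t d : ℕ} (hq2 : 2 ≤ q) (he : e ∣ q - 1) (ht0 : t ≠ 0) (hd0 : d ≠ 0)
    (h1 : ∀ p : ℕ, p.Prime → p ∣ t → p ∣ e) (h2 : Nat.gcd t ((q - 1) / e) = 1)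
    (h3 : 4 ∣ t → q % 4 = 1) (hdvd : e * t ∣ q ^ d - 1) : t ∣ d := by
  have he0 : e ≠ 0 := by rintro rfl; rw [zero_dvd_iff] at he; omega
  have hqd : q ≤ q ^ d := Nat.le_self_pow hd0 q
  have hqd0 : q ^ d - 1 ≠ 0 := by omega
  rw [← Nat.factorization_le_iff_dvd ht0 hd0, Finsupp.le_def]
  intro p
  by_cases hp : p.Prime
  swap
  · simp [Nat.factorization_eq_zero_of_not_prime _ hp]
  haveI := Fact.mk hp
  simp only [Nat.factorization_def _ hp]
  by_cases hptz : padicValNat p t = 0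
  · simp [hptz]
  have hpt : p ∣ t := by
    have : t.factorization p ≠ 0 := by rwa [Nat.factorization_def _ hp]
    exact Nat.dvd_of_factorization_pos this
  have hpe : p ∣ e := h1 p hp hpt
  have hpq1 : p ∣ q - 1 := hpe.trans he
  have hp2 := hp.two_le
  have hpnq : ¬ p ∣ q := by
    intro h
    have h1' : p ∣ q - (q - 1) := Nat.dvd_sub h hpq1
    rw [show q - (q - 1) = 1 by omega] at h1'
    have := Nat.le_of_dvd one_pos h1'
    omega
  have hk0 : (q - 1) / e ≠ 0 := by
    intro h
    have := Nat.mul_div_cancel' he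
    rw [h, Nat.mul_zero] at this
    omega
  have hpk : ¬ p ∣ (q - 1) / e := by
    intro h
    have hd1 := Nat.dvd_gcd hpt h
    rw [h2] at hd1
    have := Nat.le_of_dvd one_pos hd1
    omega
  have hveq : padicValNat p e = padicValNat p (q - 1) := by
    have : (q - 1).factorization p = e.factorization p + ((q - 1) / e).factorization p := by
      conv_lhs => rw [← Nat.mul_div_cancel' he]
      rw [Nat.factorization_mul he0 hk0, Finsupp.add_apply]
    simp only [Nat.factorization_def _ hp] at this
    rw [padicValNat.eq_zero_of_not_dvd hpk, add_zero] at this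
    omega
  have hle : padicValNat p e + padicValNat p t ≤ padicValNat p (q ^ d - 1) := by
    have h := ((Nat.factorization_le_iff_dvd (mul_ne_zero he0 ht0) hqd0).mpr hdvd) p
    rw [Nat.factorization_mul he0 ht0, Finsupp.add_apply] at h
    simpa only [Nat.factorization_def _ hp] using h
  by_cases hp2' : p = 2
  · subst hp2'
    have hqodd : q % 2 = 1 := by
      have : (2 : ℕ) ∣ q - 1 := hpq1
      omega
    by_cases hq4 : q % 4 = 1
    · have hkey : padicValNat 2 (q ^ d - 1) = padicValNat 2 (q - 1) + padicValNat 2 d := by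
        rcases Nat.even_or_odd d with hdeven | hdodd
        · have h := padicValNat.pow_two_sub_pow (x := q) (y := 1) (by omega) (by omega)
            (by omega) hd0 hdeven
          rw [one_pow] at h
          rw [v2_of_mod_four_eq_two (show (q + 1) % 4 = 2 by omega)] at h
          omega
        · rw [v2_pow_sub_one_of_odd hqodd hq2 (Nat.odd_iff.mp hdodd),
            padicValNat.eq_zero_of_not_dvd (show ¬ (2:ℕ) ∣ d by
              rw [Nat.odd_iff] at hdodd; omega), add_zero]
      omega
    · have hq4' : q % 4 = 3 := by omega
      have hc1 : padicValNat 2 t = 1 := by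
        have hub : ¬ (2 : ℕ) ^ 2 ∣ t := by
          intro h
          exact absurd (h3 (by norm_num at h; exact h)) (by omega)
        have h := (Nat.Prime.pow_dvd_iff_le_factorization Nat.prime_two ht0).not.mp hub
        rw [Nat.factorization_def _ Nat.prime_two] at h
        omega
      have hv1 : padicValNat 2 (q - 1) = 1 := by
        have hub : ¬ (2 : ℕ) ^ 2 ∣ (q - 1) := by norm_num; omega
        have h := (Nat.Prime.pow_dvd_iff_le_factorization Nat.prime_two (show q - 1 ≠ 0 by omega)).not.mp hub
        have hlb := Nat.Prime.factorization_pos_of_dvd Nat.prime_two (show q - 1 ≠ 0 by omega) hpq1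
        rw [Nat.factorization_def _ Nat.prime_two] at h hlb
        omega
      have h4dvd : (2 : ℕ) ^ 2 ∣ q ^ d - 1 := by
        rw [Nat.Prime.pow_dvd_iff_le_factorization Nat.prime_two hqd0,
          Nat.factorization_def _ Nat.prime_two]
        omega
      have hdeven : d % 2 = 0 := by
        by_contra hdo
        have h3d : (3 : ℕ) ^ d % 4 = 3 := by
          obtain ⟨k, hk⟩ : ∃ k, d = 2 * k + 1 := ⟨d / 2, by omega⟩
          subst hk
          have h9 : (9 : ℕ) ^ k % 4 = 1 := by
            rw [Nat.pow_mod]; norm_num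
          rw [pow_succ, pow_mul, show (3:ℕ)^2 = 9 by norm_num, Nat.mul_mod, h9]
        have hqd4 : q ^ d % 4 = 3 := by rw [Nat.pow_mod, hq4', h3d]
        obtain ⟨c, hc⟩ := h4dvd
        norm_num at hc
        omega
      have hdl : 0 < padicValNat 2 d := by
        have h := Nat.Prime.factorization_pos_of_dvd Nat.prime_two hd0 (show (2:ℕ) ∣ d by omega)
        rwa [Nat.factorization_def _ Nat.prime_two] at h
      omega
  · have hlte := padicValNat.pow_sub_pow (p := p) (x := q) (y := 1)
      (hp.odd_of_ne_two hp2') (by omega) (by simpa using hpq1) hpnq hd0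
    rw [one_pow] at hlte
    omega


private lemma exists_pow_eq_of_coprime {F : Type*} [Field F] [Fintype F] (a : F) {p : ℕ}
    (hp : p ≠ 0) (hco : Nat.Coprime p (Fintype.card F - 1)) : ∃ b : F, b ^ p = a := by
  have hinj : Function.Injective (fun x : F => x ^ p) := by
    intro x y hxy
    simp only at hxy
    by_cases hy : y = 0
    · subst hy
      rw [zero_pow hp] at hxy
      exact pow_eq_zero_iff hp |>.mp hxy
    by_cases hx : x = 0
    · subst hx
      rw [zero_pow hp] at hxy
      exact ((pow_eq_zero_iff hp).mp hxy.symm).symm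
    have hz : (x / y) ^ p = 1 := by rw [div_pow, hxy, div_self (pow_ne_zero _ hy)]
    have h1 : orderOf (x / y) ∣ p := orderOf_dvd_of_pow_eq_one hz
    have h2 : orderOf (x / y) ∣ Fintype.card F - 1 :=
      orderOf_dvd_of_pow_eq_one (FiniteField.pow_card_sub_one_eq_one _ (div_ne_zero hx hy))
    have h3 : orderOf (x / y) = 1 := Nat.dvd_one.mp (hco ▸ Nat.dvd_gcd h1 h2)
    have h4 := orderOf_eq_one_iff.mp h3
    rwa [div_eq_one_iff_eq hy] at h4
  obtain ⟨b, hb⟩ := Finite.injective_iff_surjective.mp hinj a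
  exact ⟨b, hb⟩

private lemma exists_pow_eq_of_dvd {F : Type*} [Field F] [Fintype F] {a : F} (ha : a ≠ 0)
    {p : ℕ} (hdvd : p ∣ (Fintype.card F - 1) / orderOf a) : ∃ b : F, b ^ p = a := by
  classical
  have h1lt : 1 < Fintype.card F := Fintype.one_lt_card
  set N := Fintype.card F - 1 with hN
  have hN0 : N ≠ 0 := by omega
  obtain ⟨g, hg⟩ := IsCyclic.exists_generator (α := Fˣ)
  have hog : orderOf g = N := by
    rw [orderOf_eq_card_of_forall_mem_zpowers hg, Nat.card_eq_fintype_card, Fintype.card_units]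
  set au : Fˣ := Units.mk0 a ha with hau
  obtain ⟨i, hi⟩ := mem_powers_iff_mem_zpowers.mpr (hg au)
  have hord : orderOf a = N / Nat.gcd N i := by
    have h0 : orderOf a = orderOf au := by rw [← orderOf_units]; rfl
    rw [h0, ← hi, orderOf_pow, hog]
  have hgcdN : Nat.gcd N i ∣ N := Nat.gcd_dvd_left N i
  have hpg : p ∣ Nat.gcd N i := by
    rw [hord, Nat.div_div_self hgcdN hN0] at hdvd
    exact hdvd
  obtain ⟨j, hj⟩ := hpg.trans (Nat.gcd_dvd_right N i)
  refine ⟨(g : F) ^ j, ?_⟩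
  have hu : (g ^ j) ^ p = au := by rw [← pow_mul, mul_comm, ← hj]; exact hi
  calc ((g : F) ^ j) ^ p = (((g ^ j) ^ p : Fˣ) : F) := by push_cast; ring
    _ = a := by rw [hu]; rfl

private lemma pow_half_eq_neg_one {F : Type*} [Field F] [Fintype F] {x : F} (hx : x ≠ 0)
    (hodd : Fintype.card F % 2 = 1) (hns : ¬ IsSquare x) :
    x ^ (Fintype.card F / 2) = -1 := by
  have h2 : 1 < Fintype.card F := Fintype.one_lt_card
  have hchar : ringChar F ≠ 2 := by
    rw [Ne, FiniteField.even_card_iff_char_two]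
    omega
  have h1 := FiniteField.pow_card_sub_one_eq_one x hx
  have hsq : x ^ (Fintype.card F / 2) * x ^ (Fintype.card F / 2) = 1 := by
    rw [← pow_add, show Fintype.card F / 2 + Fintype.card F / 2 = Fintype.card F - 1 by omega, h1]
  rcases mul_self_eq_one_iff.mp hsq with h | h
  · exact absurd ((FiniteField.isSquare_iff hchar hx).mpr h) hns
  · exact h

/-- The binomial `x^t - a` (with `t ≥ 2`, `a ≠ 0`) is irreducible over `F_q` iff
`rad(t) ∣ ord_q(a)`, `gcd(t, (q-1)/ord_q(a)) = 1`, and `4 ∣ t → q ≡ 1 (mod 4)`. -/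
theorem binomial_irreducible_iff {F : Type*} [Field F] [Fintype F]
    (q : ℕ) (hq : q = Fintype.card F) (t : ℕ) (ht : 2 ≤ t) (a : F) (ha : a ≠ 0) :
    Irreducible (X ^ t - C a : Polynomial F) ↔
      ((∏ p ∈ t.primeFactors, p) ∣ orderOf a ∧
        Nat.gcd t ((q - 1) / orderOf a) = 1 ∧
        (4 ∣ t → q % 4 = 1)) := by
  classical
  subst hq
  have hq2 : 2 ≤ Fintype.card F := Fintype.one_lt_card
  set e := orderOf a with he'
  have he : e ∣ Fintype.card F - 1 :=
    orderOf_dvd_of_pow_eq_one (FiniteField.pow_card_sub_one_eq_one a ha)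
  have ht0 : t ≠ 0 := by omega
  constructor
  · intro H
    have key : ∀ p : ℕ, p.Prime → p ∣ t → p ∣ e ∧ ¬ p ∣ ((Fintype.card F - 1) / e) := by
      intro p hp hpt
      have hb : ∀ b : F, b ^ p ≠ a := pow_ne_of_irreducible_X_pow_sub_C H hpt hp.ne_one
      have hnd2 : ¬ p ∣ (Fintype.card F - 1) / e := by
        intro h
        obtain ⟨b, hbe⟩ := exists_pow_eq_of_dvd ha h
        exact hb b hbe
      have hpq : p ∣ Fintype.card F - 1 := by
        by_contra hnd
        obtain ⟨b, hbe⟩ := exists_pow_eq_of_coprime a hp.pos.ne' ((hp.coprime_iff_not_dvd).mpr hnd)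
        exact hb b hbe
      refine ⟨?_, hnd2⟩
      have heq : Fintype.card F - 1 = e * ((Fintype.card F - 1) / e) :=
        (Nat.mul_div_cancel' he).symm
      rw [heq] at hpq
      rcases (Nat.Prime.dvd_mul hp).mp hpq with h | h
      · exact h
      · exact absurd h hnd2
    refine ⟨?_, ?_, ?_⟩
    · exact Finset.prod_primes_dvd e
        (fun p hps => (Nat.mem_primeFactors.mp hps).1.prime)
        (fun p hps => (key p (Nat.mem_primeFactors.mp hps).1 (Nat.mem_primeFactors.mp hps).2.1).1)
    · by_contra hne
      obtain ⟨p, hp, hpd⟩ := Nat.exists_prime_and_dvd hne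
      exact (key p hp (hpd.trans (Nat.gcd_dvd_left _ _))).2 (hpd.trans (Nat.gcd_dvd_right _ _))
    · intro h4
      by_contra hne41
      have h2t : 2 ∣ t := (show (2:ℕ) ∣ 4 by norm_num).trans h4
      have h2e : 2 ∣ e := (key 2 Nat.prime_two h2t).1
      have h2q : (2:ℕ) ∣ Fintype.card F - 1 := h2e.trans he
      have hqodd : Fintype.card F % 2 = 1 := by omega
      have hq43 : Fintype.card F % 4 = 3 := by omega
      have hb2 : ∀ b : F, b ^ 2 ≠ a := pow_ne_of_irreducible_X_pow_sub_C H h2t (by norm_num)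
      have hns : ¬ IsSquare a := by
        rintro ⟨r, hr⟩
        exact hb2 r (by rw [sq]; exact hr.symm)
      have hchar : ringChar F ≠ 2 := by rw [Ne, FiniteField.even_card_iff_char_two]; omega
      have hq2odd : Odd (Fintype.card F / 2) := ⟨Fintype.card F / 4, by omega⟩
      have h2ne : (2 : F) ≠ 0 := Ring.two_ne_zero hchar
      have hsqa : a ^ (Fintype.card F / 2) = -1 := pow_half_eq_neg_one ha hqodd hns
      have hnegsq : IsSquare (-a) := by
        refine (FiniteField.isSquare_iff hchar (neg_ne_zero.mpr ha)).mpr ?_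
        rw [neg_pow, hsqa, hq2odd.neg_one_pow]
        ring
      obtain ⟨c, hc⟩ := hnegsq
      have hc0 : c ≠ 0 := by
        rintro rfl
        rw [mul_zero, neg_eq_zero] at hc
        exact ha hc
      have hdd : ∃ dd : F, a = -(4 * dd ^ 4) := by
        by_cases hcs : IsSquare (c / 2)
        · obtain ⟨dd, hddq⟩ := hcs
          refine ⟨dd, ?_⟩
          have hceq : c = 2 * (dd * dd) := by
            field_simp at hddq
            linear_combination hddq
          rw [hceq] at hc
          linear_combination -hc
        · have hx0 : c / 2 ≠ 0 := div_ne_zero hc0 h2ne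
          have h1 := pow_half_eq_neg_one hx0 hqodd hcs
          have hnsq2 : IsSquare (-(c / 2)) := by
            refine (FiniteField.isSquare_iff hchar (neg_ne_zero.mpr hx0)).mpr ?_
            rw [neg_pow, h1, hq2odd.neg_one_pow]
            ring
          obtain ⟨dd, hddq⟩ := hnsq2
          refine ⟨dd, ?_⟩
          have hceq : c = -(2 * (dd * dd)) := by
            field_simp at hddq
            linear_combination -hddq
          rw [hceq] at hc
          linear_combination -hc
      obtain ⟨dd, hadd⟩ := hdd
      obtain ⟨u, hu⟩ := h4
      have hu1 : 1 ≤ u := by omega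
      have hdeg : ∀ b : F, (X ^ (2*u) + (C b * X ^ u + C (2*dd^2)) : F[X]).degree = ((2*u : ℕ) : WithBot ℕ) := by
        intro b
        rw [degree_add_eq_left_of_degree_lt, degree_X_pow]
        rw [degree_X_pow]
        refine lt_of_le_of_lt (degree_add_le _ _) (max_lt ?_ ?_)
        · refine lt_of_le_of_lt (degree_C_mul_X_pow_le u b) ?_
          exact_mod_cast (show u < 2*u by omega)
        · refine lt_of_le_of_lt degree_C_le ?_
          exact_mod_cast (show 0 < 2*u by omega)
      have hfactor : (X ^ t - C a : F[X]) =
          (X ^ (2*u) + (C (-(2*dd)) * X ^ u + C (2*dd^2))) *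
          (X ^ (2*u) + (C (2*dd) * X ^ u + C (2*dd^2))) := by
        rw [hadd, hu]
        simp only [map_neg, map_mul, map_pow, map_ofNat]
        ring
      rcases H.isUnit_or_isUnit hfactor with h | h <;>
        · rw [isUnit_iff_degree_eq_zero, hdeg] at h
          have h20 : 2*u = 0 := by exact_mod_cast h
          omega
  · rintro ⟨h1, h2, h3⟩
    have h1' : ∀ p : ℕ, p.Prime → p ∣ t → p ∣ e := fun p hp hpt =>
      (Finset.dvd_prod_of_mem _ (Nat.mem_primeFactors.mpr ⟨hp, hpt, ht0⟩)).trans h1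
    have hf0 : (X ^ t - C a : F[X]) ≠ 0 := X_pow_sub_C_ne_zero (by omega) a
    have hfu : ¬ IsUnit (X ^ t - C a : F[X]) := by
      rw [isUnit_iff_degree_eq_zero, degree_X_pow_sub_C (show 0 < t by omega)]
      exact_mod_cast ht0
    obtain ⟨g, hg, hg'⟩ := WfDvdMonoid.exists_irreducible_factor hfu hf0
    suffices hdeg : g.natDegree = t by
      exact (associated_of_dvd_of_natDegree_le hg' hf0
        (hdeg.trans natDegree_X_pow_sub_C.symm).ge).irreducible hg
    haveI := Fact.mk hg
    have hd0 : g.natDegree ≠ 0 :=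
      (natDegree_pos_iff_degree_pos.mpr (degree_pos_of_irreducible hg)).ne'
    have hdt : g.natDegree ≤ t :=
      le_trans (natDegree_le_of_dvd hg' hf0) natDegree_X_pow_sub_C.le
    letI : Fintype (AdjoinRoot g) := Module.fintypeOfFintype (AdjoinRoot.powerBasis hg.ne_zero).basis
    have hcard : Fintype.card (AdjoinRoot g) = Fintype.card F ^ g.natDegree := by
      rw [Module.card_eq_pow_finrank (K := F), (AdjoinRoot.powerBasis hg.ne_zero).finrank,
        AdjoinRoot.powerBasis_dim]
    have hroot : (AdjoinRoot.root g) ^ t = AdjoinRoot.of g a := by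
      have h := eval₂_eq_zero_of_dvd_of_eval₂_eq_zero (AdjoinRoot.of g) (AdjoinRoot.root g)
        hg' (AdjoinRoot.eval₂_root g)
      rwa [eval₂_sub, eval₂_pow, eval₂_C, eval₂_X, sub_eq_zero] at h
    have ha' : AdjoinRoot.of g a ≠ 0 := fun h => ha ((AdjoinRoot.of g).injective (h.trans (map_zero _).symm))
    have hα0 : AdjoinRoot.root g ≠ 0 := by
      intro h
      apply ha'
      rw [← hroot, h, zero_pow ht0]
    set αu : (AdjoinRoot g)ˣ := Units.mk0 _ hα0 with hαu
    have horda : orderOf (AdjoinRoot.of g a) = e := by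
      rw [he']
      exact orderOf_injective (AdjoinRoot.of g).toMonoidHom (AdjoinRoot.of g).injective a
    have hordau : orderOf (αu ^ t) = e := by
      rw [← orderOf_units]
      have hcoe : ((αu ^ t : (AdjoinRoot g)ˣ) : AdjoinRoot g) = AdjoinRoot.of g a := by
        rw [Units.val_pow_eq_pow_val, hαu, Units.val_mk0, hroot]
      rw [hcoe, horda]
    have hms : orderOf (αu ^ t) = orderOf αu / Nat.gcd (orderOf αu) t := orderOf_pow αu
    set m := orderOf αu with hm'
    have hm0 : m ≠ 0 := (orderOf_pos αu).ne'
    set s := Nat.gcd m t with hs'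
    have hsm : s ∣ m := Nat.gcd_dvd_left m t
    have hmes : m = e * s := by
      rw [hordau] at hms
      rw [hms]
      exact (Nat.div_mul_cancel hsm).symm
    have he0 : e ≠ 0 := by
      intro h
      rw [h, zero_mul] at hmes
      exact hm0 hmes
    have hs0 : s ≠ 0 := by
      intro h
      rw [h, mul_zero] at hmes
      exact hm0 hmes
    have hts : t ∣ s := by
      rw [← Nat.factorization_le_iff_dvd ht0 hs0, Finsupp.le_def]
      intro p
      by_cases hp : p.Prime
      swap
      · simp [Nat.factorization_eq_zero_of_not_prime _ hp]
      by_cases hptz : t.factorization p = 0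
      · simp [hptz]
      have hpt : p ∣ t := Nat.dvd_of_factorization_pos hptz
      have hpe : p ∣ e := h1' p hp hpt
      have hfe : 0 < e.factorization p := hp.factorization_pos_of_dvd he0 hpe
      have hkey : s.factorization p = min (m.factorization p) (t.factorization p) := by
        conv_lhs => rw [hs', Nat.factorization_gcd hm0 ht0]
        rfl
      have hmf : m.factorization p = e.factorization p + s.factorization p := by
        conv_lhs => rw [hmes, Nat.factorization_mul he0 hs0]
        rfl
      omega
    have hst : s = t := Nat.dvd_antisymm (Nat.gcd_dvd_right m t) hts
    have hdvd : e * t ∣ Fintype.card F ^ g.natDegree - 1 := by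
      have hm : m ∣ Fintype.card ((AdjoinRoot g))ˣ := orderOf_dvd_card
      rw [Fintype.card_units, hcard] at hm
      rw [← hst, ← hmes]
      exact hm
    have hdvd' := crux hq2 he ht0 hd0 h1' h2 h3 hdvd
    have := Nat.le_of_dvd (by omega) hdvd'
    omega
end

section
/- Let F_q be a finite field with q ≡ 3 (mod 4), let s be a positive integer, set t = 4s, and let a ∈ F_q^* be a nonsquare in F_q. Then there exist b, c ∈ F_q with c² = −a and b² = 2c such that x^t − a = (x^{2s} − b x^s + c)(x^{2s} + b x^s + c) in F_q[x]. -/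
open Polynomial

/-- If `q ≡ 3 (mod 4)`, `t = 4s` and `a` is a nonsquare in `F_q^*`, then
`x^t - a = (x^{2s} - b x^s + c)(x^{2s} + b x^s + c)` where `c² = -a` and `b² = 2c`. -/
theorem binomial_factors_when_q_three_mod_four {F : Type*} [Field F] [Fintype F]
    (q : ℕ) (hq : q = Fintype.card F) (hq4 : q % 4 = 3)
    (s : ℕ) (hs : 0 < s) (a : F) (ha : a ≠ 0) (hns : ¬ ∃ y : F, y ^ 2 = a) :
    ∃ b c : F, c ^ 2 = -a ∧ b ^ 2 = 2 * c ∧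
      (X ^ (4 * s) - C a : Polynomial F) =
        (X ^ (2 * s) - C b * X ^ s + C c) * (X ^ (2 * s) + C b * X ^ s + C c) := by
  classical
  have hodd : ringChar F ≠ 2 := by
    have : Fintype.card F % 2 = 1 := by omega
    intro h2
    have := FiniteField.even_card_of_char_two h2
    omega
  have hnsq : ¬ IsSquare a := by
    rintro ⟨y, hy⟩; exact hns ⟨y, by rw [sq]; exact hy.symm⟩
  have hχa : quadraticChar F a = -1 := quadraticChar_neg_one_iff_not_isSquare.mpr hnsq
  have hχn1 : quadraticChar F (-1) = -1 := by
    rw [quadraticChar_neg_one hodd, ZMod.χ₄_nat_eq_if_mod_four]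
    have hcard : Fintype.card F % 4 = 3 := hq ▸ hq4
    split_ifs with h1 h2 <;> omega
  have hsqna : IsSquare (-a) := by
    rw [← quadraticChar_one_iff_isSquare (neg_ne_zero.mpr ha)]
    rw [show (-a : F) = -1 * a by ring, map_mul, hχn1, hχa]
    ring
  obtain ⟨c0, hc0⟩ := hsqna
  have hc0sq : c0 ^ 2 = -a := by rw [sq]; exact hc0.symm
  have hc0ne : c0 ≠ 0 := by intro h; apply ha; have := hc0sq; rw [h] at this; simpa using this.symm
  -- one of 2c0, -2c0 is a square
  have h2ne : (2 : F) ≠ 0 := by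
    have : ringChar F ≠ 2 := hodd
    exact Ring.two_ne_zero this
  have key : IsSquare (2 * c0) ∨ IsSquare (2 * (-c0)) := by
    by_contra h
    push_neg at h
    have h1 : quadraticChar F (2 * c0) = -1 :=
      quadraticChar_neg_one_iff_not_isSquare.mpr h.1
    have h2 : quadraticChar F (2 * (-c0)) = -1 :=
      quadraticChar_neg_one_iff_not_isSquare.mpr h.2
    have : quadraticChar F ((2 * c0) * (2 * (-c0))) = 1 := by
      rw [map_mul, h1, h2]; ring
    have he : (2 * c0) * (2 * (-c0)) = -1 * (2*c0)^2 := by ring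
    rw [he, map_mul, map_pow, hχn1] at this
    have : (quadraticChar F (2*c0))^2 = -1 := by linarith [this]
    have h4 := quadraticChar_sq_one (mul_ne_zero h2ne hc0ne)
    rw [h4] at this
    exact absurd this (by norm_num)
  obtain hsq | hsq := key
  · obtain ⟨b, hb⟩ := hsq
    refine ⟨b, c0, hc0sq, by rw [sq]; exact hb.symm, ?_⟩
    have hb2 : (C b : F[X]) ^ 2 = 2 * C c0 := by rw [← map_pow, sq, ← hb]; simp [map_ofNat]
    have hc2 : (C c0 : F[X]) ^ 2 = - C a := by rw [← map_pow, hc0sq]; simp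
    linear_combination (X : F[X]) ^ (2 * s) * hb2 - hc2
  · obtain ⟨b, hb⟩ := hsq
    refine ⟨b, -c0, by rw [neg_sq]; exact hc0sq, by rw [sq]; exact hb.symm, ?_⟩
    have hb2 : (C b : F[X]) ^ 2 = 2 * C (-c0) := by rw [← map_pow, sq, ← hb]; simp [map_ofNat]
    have hc2 : (C (-c0) : F[X]) ^ 2 = - C a := by rw [← map_pow, neg_sq, hc0sq]; simp
    linear_combination (X : F[X]) ^ (2 * s) * hb2 - hc2
end

section
/- Let F_q be a finite field with q ≡ 3 (mod 4), and suppose b ∈ F_q satisfies b² = −2. Then in F_q[x] one has x^8 − 1 = (x − 1)(x + 1)(x² + 1)(x² + b x − 1)(x² − b x − 1), and each of the three quadratic factors x² + 1, x² + b x − 1, x² − b x − 1 is irreducible over F_q. -/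
open Polynomial

/-- If `q ≡ 3 (mod 4)` and `b² = -2` in `F_q`, then
`x^8 - 1 = (x-1)(x+1)(x²+1)(x²+bx-1)(x²-bx-1)` with the three quadratics irreducible. -/
theorem x_pow_eight_sub_one_factorization_nonsq {F : Type*} [Field F] [Fintype F]
    (q : ℕ) (hq : q = Fintype.card F) (hq4 : q % 4 = 3) (b : F) (hb : b ^ 2 = -2) :
    (X ^ 8 - 1 : Polynomial F) =
        (X - 1) * (X + 1) * (X ^ 2 + 1) * (X ^ 2 + C b * X - 1) * (X ^ 2 - C b * X - 1) ∧
      Irreducible (X ^ 2 + 1 : Polynomial F) ∧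
      Irreducible (X ^ 2 + C b * X - 1 : Polynomial F) ∧
      Irreducible (X ^ 2 - C b * X - 1 : Polynomial F) := by
  have hns : ¬ IsSquare (-1 : F) := by
    rw [FiniteField.isSquare_neg_one_iff, ← hq, hq4]; simp
  have hchar : ringChar F ≠ 2 := by
    intro h
    have := FiniteField.even_card_iff_char_two.mp h
    omega
  have h2 : (2 : F) ≠ 0 := Ring.two_ne_zero hchar
  have h2ns : ¬ IsSquare (2 : F) := by
    rintro ⟨c, hc⟩
    apply hns
    have hc0 : c ≠ 0 := by rintro rfl; simp at hc; exact h2 hc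
    exact ⟨b / c, by field_simp; linear_combination hc - hb⟩
  have key : ∀ p : Polynomial F, p.natDegree = 2 → (∀ r : F, ¬ p.IsRoot r) →
      Irreducible p := by
    intro p hdeg hroot
    rw [irreducible_iff_roots_eq_zero_of_degree_le_three (by omega) (by omega)]
    rw [Multiset.eq_zero_iff_forall_notMem]
    intro r hr
    exact hroot r ((mem_roots (by intro h; simp [h] at hdeg)).mp hr)
  have hCb : (C b : Polynomial F) ^ 2 = C (-2) := by rw [← C_pow, hb]
  refine ⟨by ring_nf; rw [hCb]; simp only [map_neg, map_ofNat]; ring, ?_, ?_, ?_⟩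
  · refine key _ (by compute_degree!) fun r hr => ?_
    simp only [IsRoot, eval_add, eval_pow, eval_X, eval_one] at hr
    exact hns ⟨r, by linear_combination -hr⟩
  · refine key _ (by compute_degree!) fun r hr => ?_
    simp only [IsRoot, eval_sub, eval_add, eval_mul, eval_pow, eval_X, eval_C, eval_one] at hr
    exact h2ns ⟨2 * r + b, by linear_combination (-4 : F) * hr - hb⟩
  · refine key _ (by compute_degree!) fun r hr => ?_
    simp only [IsRoot, eval_sub, eval_add, eval_mul, eval_pow, eval_X, eval_C, eval_one] at hr
    exact h2ns ⟨2 * r - b, by linear_combination (-4 : F) * hr - hb⟩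
end

section
/- Let F_q be a finite field and let n be a positive integer with gcd(n, q) = 1. If every monic irreducible factor of x^n − 1 in F_q[x] is a binomial of the form x^t − a for some positive integer t and some a ∈ F_q^*, then rad(n) divides q − 1, and moreover either 8 does not divide n or q ≢ 3 (mod 4). -/
open Polynomial

lemma binomial_aux_prime_dvd {F : Type*} [Field F] [Fintype F]
    (q : ℕ) (hq : q = Fintype.card F) (n : ℕ) (hn : 0 < n) (hgcd : Nat.gcd n q = 1)
    (h : ∀ f : Polynomial F, f.Monic → Irreducible f → f ∣ (X ^ n - 1 : Polynomial F) →
      ∃ (t : ℕ) (a : F), 0 < t ∧ a ≠ 0 ∧ f = X ^ t - C a)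
    (p : ℕ) (hp : p.Prime) (hpn : p ∣ n) : p ∣ q - 1 := by
  haveI : Fact p.Prime := ⟨hp⟩
  -- (p : F) ≠ 0
  have hcast : (p : F) ≠ 0 := by
    intro h0
    have hnF : (n : F) = 0 := by
      obtain ⟨k, rfl⟩ := hpn
      push_cast
      rw [h0, zero_mul]
    have hqF : (q : F) = 0 := by
      rw [hq]; exact FiniteField.cast_card_eq_zero F
    have hb := Nat.gcd_eq_gcd_ab n q
    have h1 : ((Nat.gcd n q : ℤ) : F) = 0 := by
      rw [hb]; push_cast; rw [hnF, hqF]; ring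
    rw [hgcd] at h1; norm_num at h1
  set g : Polynomial F := ∑ i ∈ Finset.range p, X ^ i with hg
  have hmul : g * (X - 1) = X ^ p - 1 := geom_sum_mul X p
  have hgu : ¬ IsUnit g := by
    intro hu
    obtain ⟨r, -, hr⟩ := Polynomial.isUnit_iff.mp hu
    have h1 : (g * (X - 1) : Polynomial F).natDegree ≤ 1 := by
      refine le_trans (natDegree_mul_le) ?_
      have hX1 : (X - 1 : Polynomial F).natDegree = 1 := by
        simpa using (natDegree_X_pow_sub_C (n := 1) (r := (1 : F)))
      rw [← hr, hX1]
      simp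
    rw [hmul] at h1
    have h2 : (X ^ p - 1 : Polynomial F).natDegree = p := by
      simpa using (natDegree_X_pow_sub_C (n := p) (r := (1 : F)))
    rw [h2] at h1
    have := hp.two_le
    omega
  obtain ⟨f, hfm, hfi, hfg⟩ := g.exists_monic_irreducible_factor hgu
  have hfp : f ∣ X ^ p - 1 := hfg.trans ⟨X - 1, hmul.symm⟩
  have hfn : f ∣ X ^ n - 1 := by
    obtain ⟨k, rfl⟩ := hpn
    refine hfp.trans ?_
    have := sub_dvd_pow_sub_pow (X ^ p : Polynomial F) 1 k
    simpa [← pow_mul] using this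
  obtain ⟨t, a, ht, ha, hfa⟩ := h f hfm hfi hfn
  have hap : a ^ p = 1 := by
    have d1 : f ∣ X ^ (t * p) - C (a ^ p) := by
      have h' := sub_dvd_pow_sub_pow (X ^ t : Polynomial F) (C a) p
      rw [← hfa, ← pow_mul, ← C_pow] at h'
      exact h'
    have d2 : f ∣ X ^ (t * p) - 1 := by
      refine hfp.trans ?_
      have := sub_dvd_pow_sub_pow (X ^ p : Polynomial F) 1 t
      simpa [← pow_mul, mul_comm p t] using this
    have d3 : f ∣ C (a ^ p) - 1 := by
      have := dvd_sub d2 d1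
      simpa using this
    by_contra hne
    have hu : IsUnit (C (a ^ p) - 1 : Polynomial F) := by
      rw [← C_1, ← C_sub]
      exact isUnit_C.2 (isUnit_iff_ne_zero.2 (sub_ne_zero.2 hne))
    exact hfi.not_isUnit (isUnit_of_dvd_unit d3 hu)
  have ha1 : a ≠ 1 := by
    rintro rfl
    have hX1 : (X - 1 : Polynomial F) ∣ f := by
      rw [hfa]
      simpa using sub_dvd_pow_sub_pow (X : Polynomial F) 1 t
    have hX1g : (X - 1 : Polynomial F) ∣ g := hX1.trans hfg
    have heval : eval 1 g = 0 := by
      obtain ⟨w, hw⟩ := hX1g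
      rw [hw]
      simp
    have heval2 : eval 1 g = (p : F) := by
      simp [hg, eval_finset_sum]
    rw [heval2] at heval
    exact hcast heval
  have hord : orderOf a = p := orderOf_eq_prime hap ha1
  have hcard : a ^ (q - 1) = 1 := by
    rw [hq]
    exact FiniteField.pow_card_sub_one_eq_one a ha
  have := orderOf_dvd_of_pow_eq_one hcard
  rwa [hord] at this

/-- If every monic irreducible factor of `x^n - 1` over `F_q` (with `gcd(n,q)=1`) is a
binomial `x^t - a`, then `rad(n) ∣ q - 1` and moreover `8 ∤ n` or `q ≢ 3 (mod 4)`. -/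
theorem necessary_conditions_for_binomial_factors {F : Type*} [Field F] [Fintype F]
    (q : ℕ) (hq : q = Fintype.card F) (n : ℕ) (hn : 0 < n) (hgcd : Nat.gcd n q = 1)
    (h : ∀ f : Polynomial F, f.Monic → Irreducible f → f ∣ (X ^ n - 1 : Polynomial F) →
      ∃ (t : ℕ) (a : F), 0 < t ∧ a ≠ 0 ∧ f = X ^ t - C a) :
    (∏ p ∈ n.primeFactors, p) ∣ (q - 1) ∧ (¬ (8 ∣ n) ∨ q % 4 ≠ 3) := by
  constructor
  · refine Finset.prod_primes_dvd _ (fun p hp => ?_) (fun p hp => ?_)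
    · exact (Nat.prime_of_mem_primeFactors hp).prime
    · exact binomial_aux_prime_dvd q hq n hn hgcd h p
        (Nat.prime_of_mem_primeFactors hp) (Nat.dvd_of_mem_primeFactors hp)
  · by_contra hc
    push_neg at hc
    obtain ⟨h8, hq4⟩ := hc
    have hcard4 : Fintype.card F % 4 = 3 := hq ▸ hq4
    have hns : ¬ IsSquare (-1 : F) := fun hs =>
      (FiniteField.isSquare_neg_one_iff.mp hs) hcard4
    -- get a quadratic factor of X^4 + 1
    have hc8 : Fintype.card F % 8 = 3 ∨ Fintype.card F % 8 = 7 := by omega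
    have hfact : ∃ g g₂ : Polynomial F, g.natDegree = 2 ∧ g * g₂ = X ^ 4 + 1 := by
      rcases hc8 with h3 | h7
      · -- -2 is a square
        obtain ⟨c, hc2⟩ : IsSquare (-2 : F) := by
          rw [FiniteField.isSquare_neg_two_iff]; omega
        refine ⟨X ^ 2 + C c * X - 1, X ^ 2 - C c * X - 1, ?_, ?_⟩
        · compute_degree!
        · have hC : (C (-2 : F) : Polynomial F) = C c * C c := by rw [hc2, C_mul]
          have hC2 : (C c * C c : Polynomial F) = -2 := by
            rw [← hC, map_neg, map_ofNat]
          linear_combination (-(X ^ 2 : Polynomial F)) * hC2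
      · -- 2 is a square
        obtain ⟨c, hc2⟩ : IsSquare (2 : F) := by
          rw [FiniteField.isSquare_two_iff]; omega
        refine ⟨X ^ 2 + C c * X + 1, X ^ 2 - C c * X + 1, ?_, ?_⟩
        · compute_degree!
        · have hC : (C (2 : F) : Polynomial F) = C c * C c := by rw [hc2, C_mul]
          have hC2 : (C c * C c : Polynomial F) = 2 := by
            rw [← hC, map_ofNat]
          linear_combination (-(X ^ 2 : Polynomial F)) * hC2
    obtain ⟨g, g₂, hgdeg, hgmul⟩ := hfact
    have hg0 : g ≠ 0 := by
      intro h0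
      rw [h0, natDegree_zero] at hgdeg
      exact two_ne_zero hgdeg.symm
    have hgu : ¬ IsUnit g := by
      intro hu
      obtain ⟨r, -, hr⟩ := Polynomial.isUnit_iff.mp hu
      rw [← hr] at hgdeg
      simp at hgdeg
    obtain ⟨f, hfm, hfi, hfg⟩ := g.exists_monic_irreducible_factor hgu
    have hf4 : f ∣ X ^ 4 + 1 := hfg.trans ⟨g₂, hgmul.symm⟩
    have hfn : f ∣ X ^ n - 1 := by
      obtain ⟨k, rfl⟩ := h8
      have h48 : (X ^ 4 + 1 : Polynomial F) ∣ X ^ 8 - 1 := ⟨X ^ 4 - 1, by ring⟩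
      refine hf4.trans (h48.trans ?_)
      have := sub_dvd_pow_sub_pow (X ^ 8 : Polynomial F) 1 k
      simpa [← pow_mul] using this
    obtain ⟨t, a, ht, ha, hfa⟩ := h f hfm hfi hfn
    have hdeg : f.natDegree = t := by rw [hfa]; exact natDegree_X_pow_sub_C
    have ht2 : t ≤ 2 := by
      rw [← hdeg, ← hgdeg]
      exact natDegree_le_of_dvd hfg hg0
    interval_cases t
    · -- t = 1 : a is a root of X^4+1
      rw [pow_one] at hfa
      have hroot : IsRoot (X ^ 4 + 1 : Polynomial F) a := by
        rw [← dvd_iff_isRoot, ← hfa]; exact hf4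
      have ha4 : a ^ 4 = -1 := by
        have := hroot
        simp only [IsRoot, eval_add, eval_pow, eval_X, eval_one] at this
        linear_combination this
      exact hns ⟨a ^ 2, by rw [← ha4]; ring⟩
    · -- t = 2 : a^2 = -1
      have hd : f ∣ (X ^ 4 + 1 : Polynomial F) - (X ^ 2 + C a) * f :=
        dvd_sub hf4 (Dvd.intro_left _ rfl)
      have he : (X ^ 4 + 1 : Polynomial F) - (X ^ 2 + C a) * f = C (a ^ 2 + 1) := by
        rw [hfa]
        simp only [C_add, C_pow, C_1]
        ring
      rw [he] at hd
      have ha2 : a ^ 2 + 1 = 0 := by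
        by_contra hne
        have hu : IsUnit (C (a ^ 2 + 1) : Polynomial F) :=
          isUnit_C.2 (isUnit_iff_ne_zero.2 hne)
        exact hfi.not_isUnit (isUnit_of_dvd_unit hd hu)
      exact hns ⟨a, by linear_combination -ha2⟩
end

section
/- Let F_q be a finite field and let n be a positive integer such that (1) q ≢ 3 (mod 4) or 8 does not divide n, and (2) rad(n) divides q − 1. Then every monic irreducible factor of x^n − 1 in F_q[x] is a binomial of the form x^t − a, where the positive integer t and a ∈ F_q^* satisfy: t divides n, ord_q(a) divides gcd(q − 1, n/t), rad(t) divides ord_q(a), gcd(t, (q − 1)/ord_q(a)) = 1, and if 4 divides t then q ≡ 1 (mod 4). -/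
/-!
Let `α` be a root of `f` in `F_q[x]/(f)`, of order `e ∣ n`, and put `t = e / gcd(e, q - 1)`.
Then `α^t` has order `gcd(e, q - 1) ∣ q - 1`, so it is an element `a` of `F_q`, and
`f ∣ x^t - a`. Conversely `e ∣ q^d - 1` for `d = deg f`, and since every prime factor of `e`
divides `q - 1`, lifting the exponent shows `t ∣ d`; the hypothesis on `q mod 4` takes care of
the prime `2` when `q ≡ 3 (mod 4)`, where lifting the exponent fails. Hence `deg f = t` and
`f = x^t - a`.
-/

open Polynomial IntermediateField

namespace Nat

theorem factorization_div_gcd {e m : ℕ} (he : e ≠ 0) (hm : m ≠ 0) (p : ℕ) :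
    (e / e.gcd m).factorization p = e.factorization p - m.factorization p := by
  rw [factorization_div (gcd_dvd_left e m), factorization_gcd he hm, Finsupp.tsub_apply,
    Finsupp.inf_apply]
  omega

theorem prime_dvd_gcd_of_dvd_div_gcd {e m p : ℕ} (he : e ≠ 0) (hp : p.Prime)
    (hpt : p ∣ e / e.gcd m) (hpm : p ∣ m) : p ∣ e.gcd m := by
  have hcop := coprime_div_gcd_div_gcd (gcd_pos_of_pos_left m (pos_of_ne_zero he))
  rw [← Nat.mul_div_cancel' (gcd_dvd_right e m)] at hpm
  exact (hp.dvd_mul.1 hpm).resolve_right fun h => hp.ne_one (eq_one_of_dvd_coprimes hcop hpt h)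

theorem prod_primeFactors_div_gcd_dvd_gcd {e m : ℕ} (he : e ≠ 0)
    (hrad : ∀ p, p.Prime → p ∣ e → p ∣ m) :
    ∏ p ∈ (e / e.gcd m).primeFactors, p ∣ e.gcd m := by
  refine Finset.prod_primes_dvd _ (fun p hp => (prime_of_mem_primeFactors hp).prime)
    fun p hp => ?_
  have hp' := prime_of_mem_primeFactors hp
  have hpt := dvd_of_mem_primeFactors hp
  exact prime_dvd_gcd_of_dvd_div_gcd he hp' hpt
    (hrad p hp' (hpt.trans (div_dvd_of_dvd (gcd_dvd_left e m))))

theorem eight_dvd_of_four_dvd_div_gcd {e m : ℕ} (he : e ≠ 0) (h2 : 2 ∣ e → 2 ∣ m)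
    (h4 : 4 ∣ e / e.gcd m) : 8 ∣ e := by
  have h2t : 2 ∣ e / e.gcd m := (by norm_num : 2 ∣ 4).trans h4
  have h2g := prime_dvd_gcd_of_dvd_div_gcd he prime_two h2t
    (h2 (h2t.trans (div_dvd_of_dvd (gcd_dvd_left e m))))
  simpa [Nat.div_mul_cancel (gcd_dvd_left e m)] using mul_dvd_mul h4 h2g

theorem factorization_pow_sub_one {p q s : ℕ} (hp : p.Prime) (hq : 1 < q) (hs : s ≠ 0)
    (hpq : p ∣ q - 1) (hp4 : p ≠ 2 ∨ 4 ∣ q - 1) :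
    (q ^ s - 1).factorization p = (q - 1).factorization p + s.factorization p := by
  have := Fact.mk hp
  have hpq' : ¬p ∣ q := fun h => hp.one_lt.ne' <|
    Nat.dvd_one.mp (by simpa [Nat.sub_sub_self hq.le] using Nat.dvd_sub h hpq)
  simp only [factorization_def _ hp]
  rcases eq_or_ne p 2 with rfl | hp2
  swap
  · simpa using padicValNat.pow_sub_pow (hp.odd_of_ne_two hp2) hq (by simpa using hpq)
      (by simpa using hpq') hs
  have h4 : (4 : ℤ) ∣ (q : ℤ) - 1 := by
    have := hp4.resolve_left (not_not.mpr rfl)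
    omega
  have key := Int.two_pow_sub_pow' s h4 (by exact_mod_cast hpq')
  rw [one_pow, ← Nat.cast_one (R := ℤ), ← Nat.cast_pow, ← Nat.cast_sub hq.le,
    ← Nat.cast_sub (Nat.one_le_pow _ _ (by omega))] at key
  rw [← Nat.cast_inj (R := ℕ∞), Nat.cast_add,
    padicValNat_eq_emultiplicity (Nat.sub_ne_zero_of_lt (Nat.one_lt_pow hs hq)),
    padicValNat_eq_emultiplicity (by omega), padicValNat_eq_emultiplicity hs]
  simpa only [← Int.natCast_emultiplicity, Nat.cast_ofNat] using key

theorem two_dvd_of_four_dvd_pow_sub_one {q s : ℕ} (hq : q % 4 = 3) (h : 4 ∣ q ^ s - 1) :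
    2 ∣ s := by
  by_contra hs
  obtain ⟨k, rfl⟩ : Odd s := Nat.odd_iff.mpr (by omega)
  have : q ^ (2 * k + 1) % 4 = 3 := by
    rw [Nat.pow_mod, hq, pow_succ, pow_mul, Nat.mul_mod, Nat.pow_mod]
    norm_num
  omega

theorem factorization_two_le_of_mod_four_eq_three {q e s : ℕ} (hq : q % 4 = 3) (hs : s ≠ 0)
    (h8 : ¬8 ∣ e) (he : e ∣ q ^ s - 1) :
    e.factorization 2 ≤ (q - 1).factorization 2 + s.factorization 2 := by
  have hv2 {n : ℕ} (k : ℕ) (hn : n ≠ 0) : 2 ^ k ∣ n ↔ k ≤ n.factorization 2 :=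
    prime_two.pow_dvd_iff_le_factorization hn
  have hq1 : (q - 1).factorization 2 = 1 := by
    have := (hv2 1 (by omega : q - 1 ≠ 0)).1 (by norm_num; omega)
    have := mt (hv2 2 (by omega : q - 1 ≠ 0)).2 (by norm_num; omega)
    omega
  rcases eq_or_ne e 0 with rfl | he0
  · simp
  have := mt (hv2 3 he0).2 (by simpa using h8)
  by_cases he2 : e.factorization 2 ≤ 1
  · omega
  have h4e : 4 ∣ e := by simpa using (hv2 2 he0).2 (by omega)
  have := (hv2 1 hs).1 (by simpa using two_dvd_of_four_dvd_pow_sub_one hq (h4e.trans he))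
  omega

theorem div_gcd_sub_one_dvd_of_dvd_pow_sub_one {q e s : ℕ} (hq : 1 < q) (hs : s ≠ 0)
    (hrad : ∀ p, p.Prime → p ∣ e → p ∣ q - 1) (h8 : 8 ∣ e → q % 4 = 1)
    (he : e ∣ q ^ s - 1) : e / e.gcd (q - 1) ∣ s := by
  have hqs : q ^ s - 1 ≠ 0 := Nat.sub_ne_zero_of_lt (Nat.one_lt_pow hs hq)
  have he0 : e ≠ 0 := ne_zero_of_dvd_ne_zero hqs he
  refine (factorization_prime_le_iff_dvd
    (Nat.div_gcd_pos_of_pos_left _ (pos_of_ne_zero he0)).ne' hs).1 fun p hp => ?_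
  rw [factorization_div_gcd he0 (by omega)]
  by_cases hpe : p ∣ e
  swap
  · simp [factorization_eq_zero_of_not_dvd hpe]
  suffices e.factorization p ≤ (q - 1).factorization p + s.factorization p by omega
  by_cases hp4 : p ≠ 2 ∨ 4 ∣ q - 1
  · rw [← factorization_pow_sub_one hp hq hs (hrad p hp hpe) hp4]
    exact (factorization_le_iff_dvd he0 hqs).2 he p
  obtain ⟨rfl, h4⟩ : p = 2 ∧ ¬4 ∣ q - 1 := by simpa only [not_or, not_not] using hp4
  have hq3 : q % 4 = 3 := by have := hrad 2 hp hpe; omega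
  exact factorization_two_le_of_mod_four_eq_three hq3 hs (fun h => by have := h8 h; omega) he

end Nat

section FiniteField

variable {F K : Type*} [Field F] [Fintype F] [Field K] [Algebra F K]

theorem exists_algebraMap_eq_of_pow_card_sub_one_eq_one {β : K}
    (hβ : β ^ (Fintype.card F - 1) = 1) : ∃ a : F, algebraMap F K a = β := by
  classical
  have hq : 0 < Fintype.card F - 1 := Nat.sub_pos_of_lt Fintype.one_lt_card
  set S := (Finset.univ.erase (0 : F)).image (algebraMap F K)
  have hS : S ⊆ nthRootsFinset (Fintype.card F - 1) (1 : K) := by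
    simp only [S, Finset.image_subset_iff, Finset.mem_erase, mem_nthRootsFinset hq, ← map_pow]
    exact fun a ⟨ha, _⟩ => by rw [FiniteField.pow_card_sub_one_eq_one a ha, map_one]
  have hcard : (nthRootsFinset (Fintype.card F - 1) (1 : K)).card ≤ S.card := by
    rw [Finset.card_image_of_injective _ (algebraMap F K).injective,
      Finset.card_erase_of_mem (Finset.mem_univ _), Finset.card_univ, nthRootsFinset_def]
    exact (Multiset.toFinset_card_le _).trans (card_nthRoots _ _)
  have hβS := Finset.eq_of_subset_of_card_le hS hcard ▸ (mem_nthRootsFinset hq 1).2 hβ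
  obtain ⟨a, -, ha⟩ := Finset.mem_image.1 hβS
  exact ⟨a, ha⟩

theorem orderOf_dvd_card_pow_natDegree_minpoly_sub_one {α : K} (hα : IsIntegral F α)
    (hα0 : α ≠ 0) : orderOf α ∣ Fintype.card F ^ (minpoly F α).natDegree - 1 := by
  have := adjoin.finiteDimensional hα
  have := Module.finite_of_finite F (M := F⟮α⟯)
  let _ := Fintype.ofFinite F⟮α⟯
  have hord : orderOf (AdjoinSimple.gen F α) = orderOf α :=
    (orderOf_injective F⟮α⟯.val.toMonoidHom Subtype.val_injective _).symm
  rw [← adjoin.finrank hα, Fintype.card_eq_nat_card, ← Module.natCard_eq_pow_finrank,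
    ← Fintype.card_eq_nat_card, ← hord]
  exact orderOf_dvd_of_pow_eq_one
    (FiniteField.pow_card_sub_one_eq_one _ fun h => hα0 (congrArg Subtype.val h))

theorem minpoly_eq_X_pow_sub_C_of_isOfFinOrder {α : K} (hα : IsOfFinOrder α)
    (hrad : ∀ p, p.Prime → p ∣ orderOf α → p ∣ Fintype.card F - 1)
    (h8 : 8 ∣ orderOf α → Fintype.card F % 4 = 1) :
    ∃ a : F, a ≠ 0 ∧ orderOf a = (orderOf α).gcd (Fintype.card F - 1) ∧
      minpoly F α = X ^ (orderOf α / (orderOf α).gcd (Fintype.card F - 1)) - C a := by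
  set q := Fintype.card F
  set e := orderOf α
  set t := e / e.gcd (q - 1)
  have he0 : e ≠ 0 := hα.orderOf_pos.ne'
  have hα0 : α ≠ 0 := by rintro rfl; exact he0 (orderOf_zero K)
  have hg : e.gcd (q - 1) ∣ e := Nat.gcd_dvd_left _ _
  have ht0 : t ≠ 0 := (Nat.div_gcd_pos_of_pos_left _ (Nat.pos_of_ne_zero he0)).ne'
  have hαt : orderOf (α ^ t) = e.gcd (q - 1) := by
    rw [orderOf_pow_of_dvd ht0 (Nat.div_dvd_of_dvd hg), Nat.div_div_self hg he0]
  obtain ⟨a, ha⟩ := exists_algebraMap_eq_of_pow_card_sub_one_eq_one (F := F)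
    (orderOf_dvd_iff_pow_eq_one.1 (hαt ▸ Nat.gcd_dvd_right e (q - 1)))
  have hint : IsIntegral F α :=
    IsIntegral.of_pow hα.orderOf_pos (by rw [pow_orderOf_eq_one]; exact isIntegral_one)
  have hdvd : minpoly F α ∣ X ^ t - C a := minpoly.dvd F α (by simp [ha])
  have htd : t ∣ (minpoly F α).natDegree :=
    Nat.div_gcd_sub_one_dvd_of_dvd_pow_sub_one Fintype.one_lt_card
      (minpoly.natDegree_pos hint).ne' hrad h8
      (orderOf_dvd_card_pow_natDegree_minpoly_sub_one hint hα0)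
  refine ⟨a, fun h => pow_ne_zero t hα0 (by rw [← ha, h, map_zero]), ?_,
    (eq_of_monic_of_dvd_of_natDegree_le (minpoly.monic hint) (monic_X_pow_sub_C a ht0)
      hdvd ?_).symm⟩
  · rw [← hαt, ← ha]
    exact (orderOf_injective (algebraMap F K).toMonoidHom (algebraMap F K).injective a).symm
  · rw [natDegree_X_pow_sub_C]
    exact Nat.le_of_dvd (minpoly.natDegree_pos hint) htd

end FiniteField

/-- If `q ≢ 3 (mod 4)` or `8 ∤ n`, and `rad(n) ∣ q - 1`, then every monic irreducible
factor of `x^n - 1` over `F_q` is a binomial `x^t - a` with `t ∣ n`,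
`ord_q(a) ∣ gcd(q-1, n/t)`, `rad(t) ∣ ord_q(a)`, `gcd(t, (q-1)/ord_q(a)) = 1`, and
`4 ∣ t → q ≡ 1 (mod 4)`. -/
theorem every_irreducible_factor_is_binomial {F : Type*} [Field F] [Fintype F]
    (q : ℕ) (hq : q = Fintype.card F) (n : ℕ) (hn : 0 < n)
    (h1 : q % 4 ≠ 3 ∨ ¬ (8 ∣ n))
    (h2 : (∏ p ∈ n.primeFactors, p) ∣ (q - 1)) :
    ∀ f : Polynomial F, f.Monic → Irreducible f → f ∣ (X ^ n - 1 : Polynomial F) →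
      ∃ (t : ℕ) (a : F), 0 < t ∧ a ≠ 0 ∧ f = X ^ t - C a ∧
        t ∣ n ∧ orderOf a ∣ Nat.gcd (q - 1) (n / t) ∧
        (∏ p ∈ t.primeFactors, p) ∣ orderOf a ∧
        Nat.gcd t ((q - 1) / orderOf a) = 1 ∧
        (4 ∣ t → q % 4 = 1) := by
  intro f hmonic hirr hfdvd
  subst hq
  have := Fact.mk hirr
  set α := AdjoinRoot.root f
  have hmin : minpoly F α = f := by
    rw [AdjoinRoot.minpoly_root hirr.ne_zero, hmonic.leadingCoeff, inv_one, C_1, mul_one]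
  have hαn : α ^ n = 1 := by simpa [sub_eq_zero] using AdjoinRoot.mk_eq_zero.2 hfdvd
  have hα : IsOfFinOrder α := isOfFinOrder_iff_pow_eq_one.2 ⟨n, hn, hαn⟩
  set e := orderOf α
  have hen : e ∣ n := orderOf_dvd_of_pow_eq_one hαn
  have he0 : e ≠ 0 := hα.orderOf_pos.ne'
  have hrad : ∀ p, p.Prime → p ∣ e → p ∣ Fintype.card F - 1 := fun p hp hpe =>
    (Finset.dvd_prod_of_mem _ (Nat.mem_primeFactors.2 ⟨hp, hpe.trans hen, hn.ne'⟩)).trans h2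
  have h8 : 8 ∣ e → Fintype.card F % 4 = 1 := fun h8e => by
    have := hrad 2 Nat.prime_two ((by norm_num : 2 ∣ 8).trans h8e)
    have := h1.resolve_right (not_not.2 (h8e.trans hen))
    have := Fintype.card_pos (α := F)
    omega
  obtain ⟨a, ha0, horda, hbin⟩ := minpoly_eq_X_pow_sub_C_of_isOfFinOrder hα hrad h8
  set g := e.gcd (Fintype.card F - 1)
  have hte : e / g ∣ e := Nat.div_dvd_of_dvd (Nat.gcd_dvd_left _ _)
  refine ⟨e / g, a, Nat.div_gcd_pos_of_pos_left _ hα.orderOf_pos, ha0, hmin.symm.trans hbin,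
    hte.trans hen, ?_, ?_, ?_,
    fun h4 => h8 (Nat.eight_dvd_of_four_dvd_div_gcd he0 (hrad 2 Nat.prime_two) h4)⟩ <;>
    rw [horda]
  · exact Nat.dvd_gcd (Nat.gcd_dvd_right _ _)
      (Nat.div_div_self (Nat.gcd_dvd_left e _) he0 ▸ Nat.div_dvd_div hte hen :)
  · exact Nat.prod_primeFactors_div_gcd_dvd_gcd he0 hrad
  · exact Nat.coprime_div_gcd_div_gcd (Nat.gcd_pos_of_pos_left _ hα.orderOf_pos)
end

section
/- Let F_q be a finite field and n a positive integer such that (1) q ≢ 3 (mod 4) or 8 does not divide n, and (2) rad(n) divides q − 1. Let θ be a generator of the cyclic group F_q^*, and set m = n/gcd(n, q − 1) and l = (q − 1)/gcd(q − 1, n). Then x^n − 1 = ∏_{t | m} ∏_{1 ≤ u ≤ gcd(n, q−1), gcd(u,t) = 1} (x^t − θ^{u l}) in F_q[x], and each factor x^t − θ^{u l} appearing in this product is irreducible over F_q. -/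
open Polynomial

universe u

open Polynomial IntermediateField Finset in
private theorem auxA : ∀ (k : ℕ), 1 ≤ k → ∀ {K : Type u} [Field K] (c : K),
    (∀ b : K, b ^ 2 ≠ c) → (2 ≤ k → IsSquare (-1 : K)) →
    Irreducible (X ^ (2 ^ k) - C c) := by
  intro k
  induction k with
  | zero => omega
  | succ k IH =>
    intro hk K _ c hc h4
    rcases Nat.eq_zero_or_pos k with rfl | hk1
    · rw [pow_one]
      exact X_pow_sub_C_irreducible_of_prime Nat.prime_two hc
    · obtain ⟨i0, hi0⟩ : IsSquare (-1 : K) := h4 (by omega)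
      have h2 : Irreducible (X ^ 2 - C c) := X_pow_sub_C_irreducible_of_prime Nat.prime_two hc
      rw [pow_succ]
      apply X_pow_mul_sub_C_irreducible h2
      intro E _ _ x hx
      have hint : IsIntegral K x := not_not.mp fun h => by
        simpa only [degree_zero, degree_X_pow_sub_C (by norm_num : 0 < 2),
          WithBot.natCast_ne_bot] using congr_arg degree (hx.symm.trans (dif_neg h))
      have hnorm : Algebra.norm K (AdjoinSimple.gen K x) = -c := by
        rw [← adjoin.powerBasis_gen hint, Algebra.PowerBasis.norm_gen_eq_coeff_zero_minpoly]
        simp [adjoin.powerBasis_gen, minpoly_gen, hx]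
      apply IH hk1
      · intro b hb
        apply hc (i0 * Algebra.norm K b)
        have hnb := congr_arg (Algebra.norm K) hb
        rw [map_pow, hnorm] at hnb
        calc (i0 * Algebra.norm K b) ^ 2 = (i0 * i0) * (Algebra.norm K b) ^ 2 := by ring
          _ = (-1) * (-c) := by rw [← hi0, hnb]
          _ = c := by ring
      · intro _
        exact ⟨algebraMap K _ i0, by rw [← map_mul, ← hi0, map_neg, map_one]⟩


open Polynomial IntermediateField in
private theorem auxB (t : ℕ) (ht : 0 < t) {K : Type u} [Field K] (c : K)
    (hc : ∀ p : ℕ, p.Prime → p ∣ t → ∀ b : K, b ^ p ≠ c) (h4 : 4 ∣ t → IsSquare (-1 : K)) :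
    Irreducible (X ^ t - C c) := by
  set k := t.factorization 2 with hkdef
  set s := t / 2 ^ k with hsdef
  have hts : 2 ^ k * s = t := Nat.ordProj_mul_ordCompl_eq_self t 2
  have hsodd : Odd s := by
    rcases Nat.even_or_odd s with he | ho
    · exact absurd he.two_dvd (Nat.not_dvd_ordCompl Nat.prime_two ht.ne')
    · exact ho
  have hsdvd : s ∣ t := Nat.ordCompl_dvd t 2
  rcases Nat.eq_zero_or_pos k with hk0 | hkpos
  · have : s = t := by rw [← hts, hk0, pow_zero, one_mul]
    rw [← this]
    exact X_pow_sub_C_irreducible_of_odd hsodd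
      (fun p hp hps b => hc p hp (hps.trans hsdvd) b)
  · rw [← hts, mul_comm]
    have h2k : Irreducible (X ^ (2 ^ k) - C c) := by
      apply auxA k hkpos c
      · exact hc 2 Nat.prime_two (dvd_trans (dvd_pow_self 2 hkpos.ne') (Nat.ordProj_dvd t 2))
      · intro hk2
        apply h4
        calc (4:ℕ) = 2 ^ 2 := by norm_num
          _ ∣ 2 ^ k := pow_dvd_pow 2 hk2
          _ ∣ t := Nat.ordProj_dvd t 2
    apply X_pow_mul_sub_C_irreducible h2k
    intro E _ _ x hx
    have hint : IsIntegral K x := not_not.mp fun h => by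
      simpa only [degree_zero, degree_X_pow_sub_C (pow_pos two_pos k),
        WithBot.natCast_ne_bot] using congr_arg degree (hx.symm.trans (dif_neg h))
    have hev : Even (2 ^ k) := ⟨2 ^ (k-1), by rw [← two_mul, ← pow_succ']; congr 1; omega⟩
    have hnorm : Algebra.norm K (AdjoinSimple.gen K x) = -c := by
      rw [← adjoin.powerBasis_gen hint, Algebra.PowerBasis.norm_gen_eq_coeff_zero_minpoly]
      simp [adjoin.powerBasis_gen, minpoly_gen, hx, hev.neg_one_pow, (Nat.two_pow_pos k).ne.symm]
      exact (Nat.two_pow_pos k).ne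
    apply X_pow_sub_C_irreducible_of_odd hsodd
    intro p hp hps b hb
    apply hc p hp (hps.trans hsdvd) (- Algebra.norm K b)
    have hnb := congr_arg (Algebra.norm K) hb
    rw [map_pow, hnorm] at hnb
    have hp2 : p ≠ 2 := by
      rintro rfl
      exact (Nat.not_even_iff_odd.mpr hsodd) (even_iff_two_dvd.mpr hps)
    rw [(hp.odd_of_ne_two hp2).neg_pow, hnb, neg_neg]


open Finset in
private theorem auxC (r : ℕ) : ∀ (k s : ℕ),
    ((Finset.Ico s (s + r * k)).filter (fun u => Nat.Coprime r u)).card = k * r.totient := by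
  intro k
  induction k with
  | zero => simp
  | succ k IH =>
    intro s
    have h1 : s + r * (k + 1) = (s + r * k) + r := by ring
    have h2 : s ≤ s + r * k := Nat.le_add_right _ _
    have h3 : s + r * k ≤ (s + r * k) + r := Nat.le_add_right _ _
    rw [h1, ← Finset.Ico_union_Ico_eq_Ico h2 h3, Finset.filter_union,
      Finset.card_union_of_disjoint
        (Finset.disjoint_filter_filter (Finset.Ico_disjoint_Ico_consecutive _ _ _)),
      IH s, Nat.filter_coprime_Ico_eq_totient r (s + r * k)]
    ring

theorem auxD (t d : ℕ) (ht : 0 < t) (hd : 0 < d) (h : ∀ p : ℕ, p.Prime → p ∣ t → p ∣ d) :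
    t * ((Finset.Icc 1 d).filter (fun u => Nat.gcd u t = 1)).card = d * t.totient := by
  set r := ∏ p ∈ t.primeFactors, p with hr
  have hpf : r.primeFactors = t.primeFactors :=
    Nat.primeFactors_prod (fun p hp => Nat.prime_of_mem_primeFactors hp)
  have hr0 : 0 < r := Finset.prod_pos (fun p hp => (Nat.prime_of_mem_primeFactors hp).pos)
  have hrd : r ∣ d := by
    have hsub : t.primeFactors ⊆ d.primeFactors := by
      intro p hp
      exact Nat.mem_primeFactors.mpr ⟨Nat.prime_of_mem_primeFactors hp,
        h p (Nat.prime_of_mem_primeFactors hp) (Nat.dvd_of_mem_primeFactors hp), hd.ne'⟩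
    calc r ∣ ∏ p ∈ d.primeFactors, p := Finset.prod_dvd_prod_of_subset _ _ _ hsub
      _ ∣ d := Nat.prod_primeFactors_dvd d
  obtain ⟨kk, hkk⟩ := hrd
  have hset : (Finset.Icc 1 d).filter (fun u => Nat.gcd u t = 1)
      = (Finset.Ico 1 (1 + r * kk)).filter (fun u => Nat.Coprime r u) := by
    have hICC : Finset.Icc 1 d = Finset.Ico 1 (1 + r * kk) := by
      rw [← hkk, add_comm, Finset.Ico_add_one_right_eq_Icc]
    rw [hICC]
    apply Finset.filter_congr
    intro u hu
    simp only [Finset.mem_Ico] at hu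
    have hu0 : u ≠ 0 := by omega
    constructor
    · intro hg
      have h1 : Nat.Coprime u t := hg
      have hdisj : Disjoint r.primeFactors u.primeFactors := by
        rw [hpf]; exact h1.symm.disjoint_primeFactors
      exact (Nat.disjoint_primeFactors hr0.ne' hu0).mp hdisj
    · intro hg
      have hdisj : Disjoint u.primeFactors t.primeFactors := by
        rw [← hpf]; exact hg.symm.disjoint_primeFactors
      exact (Nat.disjoint_primeFactors hu0 ht.ne').mp hdisj
  rw [hset, auxC r kk 1, hkk]
  have h1 := Nat.totient_mul_prod_primeFactors t
  have h2 := Nat.totient_mul_prod_primeFactors r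
  rw [hpf, ← hr] at h2
  rw [← hr] at h1
  have hphir : r.totient = ∏ p ∈ t.primeFactors, (p - 1) :=
    Nat.eq_of_mul_eq_mul_left hr0 (by rw [mul_comm r r.totient, h2])
  have key : t * r.totient = t.totient * r := by rw [hphir, ← h1]
  calc t * (kk * r.totient) = kk * (t * r.totient) := by ring
    _ = kk * (t.totient * r) := by rw [key]
    _ = r * kk * t.totient := by ring


/-- Explicit factorization of `x^n - 1` into irreducible binomials over `F_q`, when
`q ≢ 3 (mod 4)` or `8 ∤ n`, and `rad(n) ∣ q - 1`. Here `θ` generates `F_q^*`,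
`m = n / gcd(n, q-1)` and `l = (q-1) / gcd(q-1, n)`. -/
theorem explicit_binomial_factorization {F : Type*} [Field F] [Fintype F]
    (q : ℕ) (hq : q = Fintype.card F) (n : ℕ) (hn : 0 < n)
    (h1 : q % 4 ≠ 3 ∨ ¬ (8 ∣ n))
    (h2 : (∏ p ∈ n.primeFactors, p) ∣ (q - 1))
    (θ : Fˣ) (hθ : ∀ x : Fˣ, x ∈ Subgroup.zpowers θ)
    (m l : ℕ) (hm : m = n / Nat.gcd n (q - 1)) (hl : l = (q - 1) / Nat.gcd (q - 1) n) :
    (X ^ n - 1 : Polynomial F) =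
        (∏ t ∈ m.divisors,
          ∏ u ∈ (Finset.Icc 1 (Nat.gcd n (q - 1))).filter (fun u => Nat.gcd u t = 1),
            (X ^ t - C ((θ : F) ^ (u * l)))) ∧
      ∀ t ∈ m.divisors,
        ∀ u ∈ (Finset.Icc 1 (Nat.gcd n (q - 1))).filter (fun u => Nat.gcd u t = 1),
          Irreducible (X ^ t - C ((θ : F) ^ (u * l)) : Polynomial F) := by
  classical
  have hq2 : 2 ≤ q := by rw [hq]; exact Fintype.one_lt_card
  have hq1 : 0 < q - 1 := by omega
  set d := Nat.gcd n (q - 1) with hd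
  have hd0 : 0 < d := Nat.gcd_pos_of_pos_left _ hn
  have hdn : d ∣ n := Nat.gcd_dvd_left _ _
  have hdq : d ∣ q - 1 := Nat.gcd_dvd_right _ _
  have hnm : n = d * m := by rw [hm]; exact (Nat.mul_div_cancel' hdn).symm
  have hql : q - 1 = d * l := by
    rw [hl, Nat.gcd_comm (q-1) n, ← hd]; exact (Nat.mul_div_cancel' hdq).symm
  have hm0 : 0 < m := by
    rcases Nat.eq_zero_or_pos m with h | h
    · rw [h, mul_zero] at hnm; omega
    · exact h
  have hl0 : 0 < l := by
    rcases Nat.eq_zero_or_pos l with h | h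
    · rw [h, mul_zero] at hql; omega
    · exact h
  have hcard : orderOf θ = q - 1 := by
    rw [orderOf_eq_card_of_forall_mem_zpowers hθ, Nat.card_eq_fintype_card,
      Fintype.card_units, ← hq]
  have hprime : ∀ p : ℕ, p.Prime → p ∣ n → p ∣ q - 1 := fun p hp hpn =>
    dvd_trans (Finset.dvd_prod_of_mem _ (Nat.mem_primeFactors.mpr ⟨hp, hpn, hn.ne'⟩)) h2
  have hpdl : ∀ p : ℕ, p.Prime → p ∣ m → p ∣ d ∧ ¬ p ∣ l := by
    intro p hp hpm
    have hpn : p ∣ n := hnm ▸ hpm.mul_left d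
    have hpd : p ∣ d := Nat.dvd_gcd hpn (hprime p hp hpn)
    refine ⟨hpd, fun hpl => ?_⟩
    have h1' : d * p ∣ n := by rw [hnm]; exact mul_dvd_mul_left d hpm
    have h2' : d * p ∣ q - 1 := by rw [hql]; exact mul_dvd_mul_left d hpl
    have h3' : d * p ∣ d := Nat.dvd_gcd h1' h2'
    have h4' := Nat.le_of_dvd hd0 h3'
    nlinarith [hp.two_le]
  -- Irreducibility of each factor
  have hirr : ∀ t ∈ m.divisors,
      ∀ u ∈ (Finset.Icc 1 d).filter (fun u => Nat.gcd u t = 1),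
        Irreducible (X ^ t - C ((θ : F) ^ (u * l)) : Polynomial F) := by
    intro t ht u hu
    obtain ⟨htm, -⟩ := Nat.mem_divisors.mp ht
    simp only [Finset.mem_filter, Finset.mem_Icc] at hu
    obtain ⟨⟨hu1, hud⟩, hut⟩ := hu
    have ht0 : 0 < t := Nat.pos_of_dvd_of_pos htm hm0
    apply auxB t ht0
    · intro p hp hpt b hb
      have hpm : p ∣ m := hpt.trans htm
      have hpn : p ∣ n := hnm ▸ hpm.mul_left d
      obtain ⟨hpd, hpl⟩ := hpdl p hp hpm
      have hpu : ¬ p ∣ u := fun h =>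
        hp.one_lt.ne' (Nat.dvd_one.mp (hut ▸ Nat.dvd_gcd h hpt))
      have hθul0 : ((θ : F) ^ (u * l)) ≠ 0 := pow_ne_zero _ (Units.ne_zero θ)
      have hb0 : b ≠ 0 := by
        rintro rfl
        rw [zero_pow hp.ne_zero] at hb
        exact hθul0 hb.symm
      have hbu' : (Units.mk0 b hb0) ^ p = θ ^ (u * l) := by
        apply Units.ext
        rw [Units.val_pow_eq_pow_val, Units.val_pow_eq_pow_val]
        exact hb
      obtain ⟨z, hz⟩ := Subgroup.mem_zpowers_iff.mp (hθ (Units.mk0 b hb0))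
      have hzz : θ ^ (z * (p : ℤ)) = θ ^ ((u * l : ℕ) : ℤ) := by
        rw [zpow_mul, hz, zpow_natCast, zpow_natCast, hbu']
      have hmod := zpow_eq_zpow_iff_modEq.mp hzz
      rw [hcard] at hmod
      have hdvd2 : ((q - 1 : ℕ) : ℤ) ∣ ((u * l : ℕ) : ℤ) - z * p := hmod.dvd
      have hpq1 : (p : ℤ) ∣ ((q - 1 : ℕ) : ℤ) := Int.natCast_dvd_natCast.mpr (hprime p hp hpn)
      have hpul : (p : ℤ) ∣ ((u * l : ℕ) : ℤ) := by
        have h5 : (p : ℤ) ∣ ((u * l : ℕ) : ℤ) - z * p := hpq1.trans hdvd2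
        have h6 : (p : ℤ) ∣ z * p := dvd_mul_left _ _
        have := dvd_add h5 h6
        simpa using this
      have : p ∣ u * l := by exact_mod_cast hpul
      rcases hp.dvd_mul.mp this with h | h
      · exact hpu h
      · exact hpl h
    · intro h4t
      apply (FiniteField.isSquare_neg_one_iff).mpr
      rw [← hq]
      rcases h1 with hq3 | h8
      · exact hq3
      · intro hq3
        apply h8
        have h2q : 2 ∣ q - 1 := by omega
        have h4q : ¬ 4 ∣ q - 1 := by omega
        have h4m : 4 ∣ m := h4t.trans htm
        have hfq : (q - 1).factorization 2 = 1 := by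
          have ha : (2:ℕ) ^ 1 ∣ q - 1 := by simpa using h2q
          have hb' : ¬ (2:ℕ) ^ 2 ∣ q - 1 := by
            intro h; exact h4q (by simpa using h)
          have ha2 := (Nat.Prime.pow_dvd_iff_le_factorization Nat.prime_two hq1.ne').mp ha
          have hb2 : ¬ 2 ≤ (q - 1).factorization 2 := fun h =>
            hb' ((Nat.Prime.pow_dvd_iff_le_factorization Nat.prime_two hq1.ne').mpr h)
          omega
        have hfm : 2 ≤ m.factorization 2 := by
          have h4m' : (2:ℕ) ^ 2 ∣ m := by simpa using h4m
          exact (Nat.Prime.pow_dvd_iff_le_factorization Nat.prime_two hm0.ne').mp h4m'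
        have hfd : d.factorization 2 = min (n.factorization 2) ((q - 1).factorization 2) := by
          rw [hd, Nat.factorization_gcd hn.ne' hq1.ne', Finsupp.inf_apply]
        have hfm' : m.factorization 2 = n.factorization 2 - d.factorization 2 := by
          rw [hm, Nat.factorization_div hdn, Finsupp.tsub_apply]
        have h8n : (2:ℕ) ^ 3 ∣ n :=
          (Nat.Prime.pow_dvd_iff_le_factorization Nat.prime_two hn.ne').mpr (by omega)
        simpa using h8n
  refine ⟨?_, hirr⟩
  -- the product identity
  set D : ℕ → Finset ℕ := fun t => (Finset.Icc 1 d).filter (fun u => Nat.gcd u t = 1) with hD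
  set S := m.divisors.sigma D with hS
  have hmon : ∀ x ∈ S, (X ^ x.1 - C ((θ : F) ^ (x.2 * l))).Monic := by
    intro x hx
    obtain ⟨hx1, hx2⟩ := Finset.mem_sigma.mp hx
    exact monic_X_pow_sub_C _ (Nat.pos_of_mem_divisors hx1).ne'
  have hdvd : ∀ x ∈ S, (X ^ x.1 - C ((θ : F) ^ (x.2 * l))) ∣ (X ^ n - 1 : Polynomial F) := by
    intro x hx
    obtain ⟨hx1, hx2⟩ := Finset.mem_sigma.mp hx
    obtain ⟨htm, -⟩ := Nat.mem_divisors.mp hx1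
    obtain ⟨v, hv⟩ := htm
    have hroot : ((θ : F) ^ (x.2 * l)) ^ (d * v) = 1 := by
      rw [← pow_mul]
      have he : x.2 * l * (d * v) = (q - 1) * (x.2 * v) := by rw [hql]; ring
      rw [he, pow_mul]
      have hθ1 : (θ : F) ^ (q - 1) = 1 := by
        rw [← Units.val_pow_eq_pow_val, ← hcard, pow_orderOf_eq_one, Units.val_one]
      rw [hθ1, one_pow]
    have h1d : (X - C ((θ : F) ^ (x.2 * l))) ∣ (X ^ (d * v) - 1 : Polynomial F) := by
      rw [dvd_iff_isRoot]
      simp [IsRoot, hroot]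
    obtain ⟨w, hw⟩ := h1d
    refine ⟨w.comp (X ^ x.1), ?_⟩
    have hcomp := congr_arg (fun pp : Polynomial F => pp.comp (X ^ x.1)) hw
    simp only [mul_comp, sub_comp, X_comp, C_comp, one_comp, pow_comp] at hcomp
    rw [← pow_mul] at hcomp
    have hxn : x.1 * (d * v) = n := by rw [hnm, hv]; ring
    rwa [hxn] at hcomp
  have hinj : ∀ x ∈ S, ∀ y ∈ S,
      (X ^ x.1 - C ((θ : F) ^ (x.2 * l)) : Polynomial F) = X ^ y.1 - C ((θ : F) ^ (y.2 * l)) →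
      x = y := by
    intro x hx y hy hxy
    obtain ⟨hx1, hx2⟩ := Finset.mem_sigma.mp hx
    obtain ⟨hy1, hy2⟩ := Finset.mem_sigma.mp hy
    simp only [hD, Finset.mem_filter, Finset.mem_Icc] at hx2 hy2
    have hdeg : x.1 = y.1 := by
      have := congr_arg natDegree hxy
      rwa [natDegree_X_pow_sub_C, natDegree_X_pow_sub_C] at this
    rw [hdeg] at hxy
    have hC : ((θ : F) ^ (x.2 * l)) = ((θ : F) ^ (y.2 * l)) :=
      C_injective (sub_right_inj.mp hxy)
    have hU : θ ^ (x.2 * l) = θ ^ (y.2 * l) := Units.ext (by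
      rw [Units.val_pow_eq_pow_val, Units.val_pow_eq_pow_val]; exact hC)
    have hmodEq : x.2 * l ≡ y.2 * l [MOD q - 1] := by
      have := pow_eq_pow_iff_modEq.mp hU
      rwa [hcard] at this
    rw [hql] at hmodEq
    have hmq : x.2 ≡ y.2 [MOD d] := Nat.ModEq.mul_right_cancel' hl0.ne' hmodEq
    have hu : x.2 = y.2 := by
      rcases le_total x.2 y.2 with hle | hle
      · have hdv : d ∣ y.2 - x.2 := (Nat.modEq_iff_dvd' hle).mp hmq
        have : y.2 - x.2 = 0 := by
          by_contra hne
          have := Nat.le_of_dvd (Nat.pos_of_ne_zero hne) hdv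
          omega
        omega
      · have hdv : d ∣ x.2 - y.2 := (Nat.modEq_iff_dvd' hle).mp hmq.symm
        have : x.2 - y.2 = 0 := by
          by_contra hne
          have := Nat.le_of_dvd (Nat.pos_of_ne_zero hne) hdv
          omega
        omega
    rcases x with ⟨x1, x2⟩
    rcases y with ⟨y1, y2⟩
    simp only at hdeg hu
    simp [hdeg, hu]
  have hcop : (↑S : Set ((_ : ℕ) × ℕ)).Pairwise
      (Function.onFun IsCoprime (fun x => (X ^ x.1 - C ((θ : F) ^ (x.2 * l)) : Polynomial F))) := by
    intro x hx y hy hne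
    have hx' := Finset.mem_coe.mp hx
    have hy' := Finset.mem_coe.mp hy
    obtain ⟨hx1, hx2⟩ := Finset.mem_sigma.mp hx'
    obtain ⟨hy1, hy2⟩ := Finset.mem_sigma.mp hy'
    have hix : Irreducible (X ^ x.1 - C ((θ : F) ^ (x.2 * l)) : Polynomial F) :=
      hirr x.1 hx1 x.2 hx2
    have hiy : Irreducible (X ^ y.1 - C ((θ : F) ^ (y.2 * l)) : Polynomial F) :=
      hirr y.1 hy1 y.2 hy2
    rw [Function.onFun, hix.coprime_iff_not_dvd]
    intro hdvd'
    exact hne (hinj x hx' y hy'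
      (eq_of_monic_of_associated (hmon x hx') (hmon y hy') (hix.associated_of_dvd hiy hdvd')))
  have hdegsum : ∑ x ∈ S, (X ^ x.1 - C ((θ : F) ^ (x.2 * l)) : Polynomial F).natDegree = n := by
    have hterm : ∀ x ∈ S, (X ^ x.1 - C ((θ : F) ^ (x.2 * l)) : Polynomial F).natDegree = x.1 :=
      fun x _ => natDegree_X_pow_sub_C
    rw [Finset.sum_congr rfl hterm, hS, Finset.sum_sigma]
    have hterm2 : ∀ t ∈ m.divisors, (∑ _u ∈ D t, t) = d * t.totient := by
      intro t ht'
      rw [Finset.sum_const, smul_eq_mul, mul_comm]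
      exact auxD t d (Nat.pos_of_mem_divisors ht') hd0
        (fun p hp hpt => (hpdl p hp (hpt.trans (Nat.mem_divisors.mp ht').1)).1)
    rw [Finset.sum_congr rfl hterm2, ← Finset.mul_sum]
    have : ∑ t ∈ m.divisors, t.totient = m := Nat.sum_totient m
    rw [this, ← hnm]
  have hPd : (∏ x ∈ S, (X ^ x.1 - C ((θ : F) ^ (x.2 * l)) : Polynomial F)) ∣ X ^ n - 1 :=
    Finset.prod_dvd_of_coprime hcop hdvd
  have hPm : (∏ x ∈ S, (X ^ x.1 - C ((θ : F) ^ (x.2 * l)) : Polynomial F)).Monic :=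
    monic_prod_of_monic _ _ hmon
  have hXm : (X ^ n - 1 : Polynomial F).Monic := by
    have := monic_X_pow_sub_C (1 : F) hn.ne'
    simpa using this
  have hXdeg : (X ^ n - 1 : Polynomial F).natDegree = n := by
    have h' : (X ^ n - 1 : Polynomial F) = X ^ n - C 1 := by rw [map_one]
    rw [h', natDegree_X_pow_sub_C]
  have hPdeg : (∏ x ∈ S, (X ^ x.1 - C ((θ : F) ^ (x.2 * l)) : Polynomial F)).natDegree = n := by
    rw [natDegree_prod _ _ (fun x hx => (hmon x hx).ne_zero), hdegsum]
  have hfinal : (∏ x ∈ S, (X ^ x.1 - C ((θ : F) ^ (x.2 * l)) : Polynomial F)) = X ^ n - 1 :=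
    eq_of_monic_of_associated hPm hXm
      (associated_of_dvd_of_natDegree_le hPd hXm.ne_zero (by rw [hXdeg, hPdeg]))
  calc (X ^ n - 1 : Polynomial F)
      = ∏ x ∈ S, (X ^ x.1 - C ((θ : F) ^ (x.2 * l)) : Polynomial F) := hfinal.symm
    _ = ∏ t ∈ m.divisors, ∏ u ∈ D t, (X ^ t - C ((θ : F) ^ (u * l)) : Polynomial F) :=
      Finset.prod_sigma _ _ _
end

section
/- Let F_q be a finite field and n a positive integer such that (1) q ≢ 3 (mod 4) or 8 does not divide n, and (2) rad(n) divides q − 1. Set m = n/gcd(n, q − 1). Then for each divisor t of m, the number of distinct monic irreducible factors of x^n − 1 in F_q[x] of degree t equals (φ(t)/t) · gcd(n, q − 1), and x^n − 1 has no monic irreducible factor whose degree is not a divisor of m. -/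
open Polynomial UniqueFactorizationMonoid Finset

/-!
Write `d = gcd(n, q - 1)`, `m = n / d` and `N_u` for the number of monic irreducible factors of
`X ^ n - 1` of degree `u`. Such a factor divides `X ^ (q ^ s) - X` iff its degree divides `s`, so
the factors of degree dividing `s` are exactly those of `X ^ gcd(n, q ^ s - 1) - 1`. Since
`X ^ n - 1` is squarefree, comparing degrees gives `∑_{u ∣ s} u N_u = gcd(n, q ^ s - 1)`.
Lifting the exponent at each prime `p ∣ n` (all of which divide `q - 1`) turns the right-hand side
into `gcd(n, (q - 1) s) = d gcd(s, m) = ∑_{u ∣ s, u ∣ m} d φ(u)`. Two functions with the same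
divisor sums agree, so `u N_u = d φ(u)` if `u ∣ m` and `N_u = 0` otherwise.
-/

namespace Nat

theorem not_dvd_of_dvd_sub_one {p q : ℕ} (hp : p ≠ 1) (hq : q ≠ 0) (h : p ∣ q - 1) : ¬p ∣ q := by
  intro hpq
  have := Nat.dvd_sub hpq h
  rw [Nat.sub_sub_self (one_le_iff_ne_zero.mpr hq)] at this
  exact hp (dvd_one.mp this)

theorem coprime_of_prod_primeFactors_dvd_sub_one {n q : ℕ} (hn : n ≠ 0) (hq : q ≠ 0)
    (h : ∏ p ∈ n.primeFactors, p ∣ q - 1) : n.Coprime q :=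
  coprime_of_dvd fun _ hp hpn => not_dvd_of_dvd_sub_one hp.ne_one hq
    ((dvd_prod_of_mem _ (mem_primeFactors.2 ⟨hp, hpn, hn⟩)).trans h)

theorem gcd_mul_eq_gcd_mul_gcd_div (n k s : ℕ) :
    gcd n (k * s) = gcd n k * gcd s (n / gcd n k) := by
  obtain ⟨n', k', hcop, hn, hk⟩ := exists_coprime n k
  set g := gcd n k
  rcases g.eq_zero_or_pos with hg | hg
  · simp [hn, hk, hg]
  rw [hn, hk, mul_right_comm, gcd_mul_right, hcop.symm.gcd_mul_left_cancel_right, gcd_comm s,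
    Nat.mul_div_cancel _ hg, mul_comm]

theorem sum_divisors_ite_dvd_totient {s : ℕ} (m : ℕ) (hs : s ≠ 0) :
    ∑ u ∈ s.divisors, (if u ∣ m then u.totient else 0) = gcd s m := by
  have : {u ∈ s.divisors | u ∣ m} = {u ∈ s.divisors | u ∣ gcd s m} :=
    filter_congr fun u hu => by rw [dvd_gcd_iff, and_iff_right (dvd_of_mem_divisors hu)]
  rw [← sum_filter, this, divisors_filter_dvd_of_dvd hs (gcd_dvd_left s m), sum_totient]

theorem eq_of_forall_sum_divisors_eq {M : Type*} [AddCancelCommMonoid M] {f g : ℕ → M}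
    (h : ∀ n > 0, ∑ i ∈ n.divisors, f i = ∑ i ∈ n.divisors, g i) : ∀ n > 0, f n = g n := by
  intro n
  induction n using Nat.strong_induction_on with
  | _ n ih =>
    intro hn
    have hsum := h n hn
    rw [← cons_self_properDivisors hn.ne', sum_cons, sum_cons,
      sum_congr rfl fun i hi => ih i (mem_properDivisors.1 hi).2 (pos_of_mem_properDivisors hi)]
      at hsum
    exact add_right_cancel hsum

end Nat

theorem padicValNat.pow_sub_one_of_not_dvd {p q s : ℕ} [hp : Fact p.Prime] (hpq : p ∣ q - 1)
    (hps : ¬p ∣ s) : padicValNat p (q ^ s - 1) = padicValNat p (q - 1) := by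
  have hs : s ≠ 0 := by rintro rfl; exact hps (dvd_zero p)
  rcases le_or_gt q 1 with hq | hq
  · interval_cases q <;> simp [hs]
  rw [← Nat.cast_inj (R := ℕ∞), padicValNat_eq_emultiplicity, padicValNat_eq_emultiplicity,
    ← Int.natCast_emultiplicity, ← Int.natCast_emultiplicity,
    Nat.cast_sub (Nat.one_le_pow _ _ (by omega)), Nat.cast_sub hq.le]
  · have hpq1 : (p : ℤ) ∣ q - 1 := by
      simpa [Nat.cast_sub hq.le] using Int.natCast_dvd_natCast.mpr hpq
    simpa using emultiplicity_pow_sub_pow_of_prime (Nat.prime_iff_prime_int.mp hp.out)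
      (y := 1) hpq1 (by exact_mod_cast Nat.not_dvd_of_dvd_sub_one hp.out.ne_one (by omega) hpq)
      (n := s) (by exact_mod_cast hps)
  · omega
  · have := Nat.one_lt_pow hs hq; omega

/-- Lifting the exponent, truncated at `a`: the truncation absorbs the exceptional case
`p = 2`, `q ≡ 3 (mod 4)`, `s` even, where `v₂(q ^ s - 1)` exceeds `v₂(q - 1) + v₂(s)`. -/
theorem min_padicValNat_pow_sub_one {p q s a : ℕ} [hp : Fact p.Prime] (hq : 1 < q)
    (hpq : p ∣ q - 1) (hs : s ≠ 0) (ha : p = 2 → q % 4 = 3 → a ≤ 2) :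
    min a (padicValNat p (q ^ s - 1)) = min a (padicValNat p (q - 1) + padicValNat p s) := by
  by_cases hps : p ∣ s
  swap
  · rw [padicValNat.pow_sub_one_of_not_dvd hpq hps, padicValNat.eq_zero_of_not_dvd hps, add_zero]
  rcases hp.out.eq_two_or_odd' with rfl | hodd
  · have hq2 : ¬2 ∣ q := by omega
    have hseven : Even s := even_iff_two_dvd.mpr hps
    rcases (by omega : q % 4 = 1 ∨ q % 4 = 3) with hq4 | hq4
    · have hlte := padicValNat.pow_two_sub_one hq hq2 hs hseven
      have hv_ge := (padicValNat_dvd_iff_le (p := 2) (n := 1) (a := q + 1) (by omega)).mp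
        (by omega)
      have hv_lt := (padicValNat_dvd_iff_le (p := 2) (n := 2) (a := q + 1) (by omega)).not.mp
        (by omega)
      omega
    · have hV := padicValNat.pow_two_sub_one_ge hq hq2 hs hseven
      have hS := one_le_padicValNat_of_dvd hs hps
      have hb := one_le_padicValNat_of_dvd (by omega) hpq
      have ha2 := ha rfl hq4
      rw [min_eq_left (by omega), min_eq_left (by omega)]
  · have hlte := padicValNat.pow_sub_pow (y := 1) hodd hq hpq
      (Nat.not_dvd_of_dvd_sub_one hp.out.ne_one (by omega) hpq) hs
    rw [one_pow] at hlte
    rw [hlte]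

theorem Nat.gcd_pow_sub_one_eq_gcd_mul {n q s : ℕ} (hn : n ≠ 0) (hq : 1 < q)
    (hrad : ∏ p ∈ n.primeFactors, p ∣ q - 1) (h8 : q % 4 ≠ 3 ∨ ¬8 ∣ n) (hs : s ≠ 0) :
    gcd n (q ^ s - 1) = gcd n ((q - 1) * s) := by
  have hqs : q ^ s - 1 ≠ 0 := by have := one_lt_pow hs hq; omega
  have hq1s : (q - 1) * s ≠ 0 := mul_ne_zero (by omega) hs
  refine eq_of_factorization_eq (gcd_ne_zero_left hn) (gcd_ne_zero_left hn) fun p => ?_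
  by_cases hp : p.Prime
  swap
  · simp [factorization_eq_zero_of_not_prime _ hp]
  have := Fact.mk hp
  simp only [factorization_gcd hn hqs, factorization_gcd hn hq1s, Finsupp.inf_apply,
    factorization_mul (show q - 1 ≠ 0 by omega) hs, Finsupp.add_apply, factorization_def _ hp]
  by_cases hpn : p ∣ n
  · refine min_padicValNat_pow_sub_one hq
      ((dvd_prod_of_mem _ (mem_primeFactors.2 ⟨hp, hpn, hn⟩)).trans hrad) hs ?_
    rintro rfl hq4
    by_contra! h3
    exact h8.resolve_left (not_not.mpr hq4) ((padicValNat_dvd_iff_le (n := 3) hn).mpr h3)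
  · simp [padicValNat.eq_zero_of_not_dvd hpn]

namespace Polynomial

section CommRing

variable {R : Type*} [CommRing R] {f : R[X]}

theorem dvd_X_pow_sub_one_iff_root_pow_eq_one {k : ℕ} :
    f ∣ X ^ k - 1 ↔ AdjoinRoot.root f ^ k = 1 := by
  rw [← AdjoinRoot.mk_eq_zero, map_sub, map_pow, AdjoinRoot.mk_X, map_one, sub_eq_zero]

theorem dvd_X_pow_gcd_sub_one_iff {a b : ℕ} :
    f ∣ X ^ Nat.gcd a b - 1 ↔ f ∣ X ^ a - 1 ∧ f ∣ X ^ b - 1 := by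
  simp only [dvd_X_pow_sub_one_iff_root_pow_eq_one, pow_gcd_eq_one]

theorem isCoprime_X_pow_sub_one_X {n : ℕ} (hn : n ≠ 0) : IsCoprime (X ^ n - 1 : R[X]) X :=
  ⟨-1, X ^ (n - 1), by rw [← pow_succ, Nat.sub_add_cancel (Nat.one_le_iff_ne_zero.mpr hn)]; ring⟩

theorem dvd_X_pow_sub_X_iff_dvd_X_pow_pred_sub_one (hf : IsCoprime f X) {N : ℕ} (hN : N ≠ 0) :
    f ∣ X ^ N - X ↔ f ∣ X ^ (N - 1) - 1 := by
  have : (X ^ N - X : R[X]) = X * (X ^ (N - 1) - 1) := by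
    rw [mul_sub, mul_one, ← pow_succ', Nat.sub_add_cancel (Nat.one_le_iff_ne_zero.mpr hN)]
  rw [this]
  exact ⟨hf.dvd_of_dvd_mul_left, fun h => h.mul_left X⟩

end CommRing

section Field

variable {K : Type*} [Field K]

theorem squarefree_X_pow_sub_one {n : ℕ} (hn : (n : K) ≠ 0) : Squarefree (X ^ n - 1 : K[X]) := by
  simpa using (separable_X_pow_sub_C (1 : K) hn one_ne_zero).squarefree

variable [DecidableEq K]

theorem mem_primeFactors_iff {f P : K[X]} (hP : P ≠ 0) :
    f ∈ primeFactors P ↔ Irreducible f ∧ f.Monic ∧ f ∣ P := by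
  rw [mem_primeFactors, Polynomial.mem_normalizedFactors_iff hP]

theorem sum_natDegree_primeFactors {P : K[X]} (hP : Squarefree P) :
    ∑ f ∈ primeFactors P, f.natDegree = P.natDegree := by
  have hP0 := hP.ne_zero
  rw [← toFinset_normalizedFactors, sum_eq_multiset_sum, Multiset.toFinset_val,
    ((squarefree_iff_nodup_normalizedFactors hP0).mp hP).dedup]
  conv_rhs => rw [← leadingCoeff_mul_prod_normalizedFactors P]
  rw [natDegree_C_mul (leadingCoeff_ne_zero.mpr hP0), natDegree_multiset_prod_of_monic]
  exact fun f hf => ((Polynomial.mem_normalizedFactors_iff hP0).mp hf).2.1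

end Field

end Polynomial

theorem FiniteField.natCast_ne_zero_of_coprime_card {K : Type*} [Field K] [Finite K] {n : ℕ}
    (h : n.Coprime (Nat.card K)) : (n : K) ≠ 0 := by
  have := Fintype.ofFinite K
  rw [Nat.card_eq_fintype_card] at h
  exact fun h0 => CharP.ringChar_ne_one ((h.coprime_dvd_left (ringChar.dvd h0)).eq_one_of_dvd
    (ringChar.dvd (FiniteField.cast_card_eq_zero K)))

section FiniteField

variable {K : Type*} [Field K] [Finite K]

theorem Irreducible.dvd_X_pow_gcd_card_pow_sub_one_iff {f : K[X]} (hf : Irreducible f)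
    {n : ℕ} (hn : n ≠ 0) (s : ℕ) :
    f ∣ X ^ Nat.gcd n (Nat.card K ^ s - 1) - 1 ↔ f ∣ X ^ n - 1 ∧ f.natDegree ∣ s := by
  rw [dvd_X_pow_gcd_sub_one_iff]
  refine and_congr_right fun hfn => ?_
  rw [hf.natDegree_dvd_iff_dvd_X_pow_card_pow_sub_X,
    dvd_X_pow_sub_X_iff_dvd_X_pow_pred_sub_one
      ((isCoprime_X_pow_sub_one_X hn).of_isCoprime_of_dvd_left hfn)
      (pow_ne_zero _ Nat.card_pos.ne')]

theorem sum_divisors_mul_card_primeFactors_X_pow_sub_one [DecidableEq K] {n : ℕ}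
    (hsq : Squarefree (X ^ n - 1 : K[X])) {s : ℕ} (hs : s ≠ 0) :
    ∑ u ∈ s.divisors, u * #{f ∈ primeFactors (X ^ n - 1 : K[X]) | f.natDegree = u}
      = Nat.gcd n (Nat.card K ^ s - 1) := by
  have hn : n ≠ 0 := by rintro rfl; simp at hsq
  set g := Nat.gcd n (Nat.card K ^ s - 1)
  have hg : (X ^ g - 1 : K[X]) ∣ X ^ n - 1 := (dvd_X_pow_gcd_sub_one_iff.mp dvd_rfl).1
  have hsqg := hsq.squarefree_of_dvd hg
  have hfactors : {f ∈ primeFactors (X ^ n - 1 : K[X]) | f.natDegree ∈ s.divisors}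
      = primeFactors (X ^ g - 1 : K[X]) := by
    ext f
    simp only [mem_filter, Nat.mem_divisors, and_iff_left hs, mem_primeFactors_iff hsq.ne_zero,
      mem_primeFactors_iff hsqg.ne_zero]
    constructor
    · rintro ⟨⟨hf, hmon, hfn⟩, hdeg⟩
      exact ⟨hf, hmon, (hf.dvd_X_pow_gcd_card_pow_sub_one_iff hn s).mpr ⟨hfn, hdeg⟩⟩
    · rintro ⟨hf, hmon, hfg⟩
      obtain ⟨hfn, hdeg⟩ := (hf.dvd_X_pow_gcd_card_pow_sub_one_iff hn s).mp hfg
      exact ⟨⟨hf, hmon, hfn⟩, hdeg⟩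
  calc ∑ u ∈ s.divisors, u * #{f ∈ primeFactors (X ^ n - 1 : K[X]) | f.natDegree = u}
      = ∑ u ∈ s.divisors, ∑ f ∈ primeFactors (X ^ n - 1 : K[X]) with f.natDegree = u,
          f.natDegree := by
        refine sum_congr rfl fun u _ => ?_
        rw [sum_congr rfl fun f hf => (mem_filter.mp hf).2, sum_const, smul_eq_mul, mul_comm]
    _ = ∑ f ∈ primeFactors (X ^ g - 1 : K[X]), f.natDegree := by
        rw [sum_fiberwise_eq_sum_filter, hfactors]
    _ = g := by rw [sum_natDegree_primeFactors hsqg, ← C_1, natDegree_X_pow_sub_C]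

theorem mul_card_primeFactors_X_pow_sub_one_eq [DecidableEq K] {n d m : ℕ}
    (hsq : Squarefree (X ^ n - 1 : K[X]))
    (hgcd : ∀ s ≠ 0, Nat.gcd n (Nat.card K ^ s - 1) = d * Nat.gcd s m) {t : ℕ} (ht : 0 < t) :
    t * #{f ∈ primeFactors (X ^ n - 1 : K[X]) | f.natDegree = t}
      = if t ∣ m then d * t.totient else 0 := by
  refine Nat.eq_of_forall_sum_divisors_eq
    (f := fun u => u * #{f ∈ primeFactors (X ^ n - 1 : K[X]) | f.natDegree = u})
    (g := fun u => if u ∣ m then d * u.totient else 0) (fun s hs => ?_) t ht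
  rw [sum_divisors_mul_card_primeFactors_X_pow_sub_one hsq hs.ne', hgcd s hs.ne',
    ← Nat.sum_divisors_ite_dvd_totient m hs.ne', mul_sum]
  simp only [mul_ite, mul_zero]

end FiniteField

/-- Under the hypotheses of the binomial factorization (`q ≢ 3 (mod 4)` or `8 ∤ n`, and
`rad(n) ∣ q - 1`), for each divisor `t` of `m = n / gcd(n, q-1)` the number of distinct
monic irreducible factors of `x^n - 1` of degree `t` is `(φ(t)/t)·gcd(n, q-1)`, and every
monic irreducible factor has degree dividing `m`. -/
theorem count_irreducible_factors_of_degree {F : Type*} [Field F] [Fintype F]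
    (q : ℕ) (hq : q = Fintype.card F) (n : ℕ) (hn : 0 < n)
    (h1 : q % 4 ≠ 3 ∨ ¬ (8 ∣ n))
    (h2 : (∏ p ∈ n.primeFactors, p) ∣ (q - 1))
    (m : ℕ) (hm : m = n / Nat.gcd n (q - 1)) :
    (∀ t, t ∣ m →
      (({f : Polynomial F | f.Monic ∧ Irreducible f ∧ f ∣ (X ^ n - 1 : Polynomial F) ∧
            f.natDegree = t}.ncard : ℚ)
        = (Nat.totient t : ℚ) / (t : ℚ) * (Nat.gcd n (q - 1) : ℚ))) ∧
    ∀ f : Polynomial F, f.Monic → Irreducible f → f ∣ (X ^ n - 1 : Polynomial F) →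
      f.natDegree ∣ m := by
  classical
  rw [← Nat.card_eq_fintype_card] at hq
  subst hq
  set d := Nat.gcd n (Nat.card F - 1)
  have hdm : d * m = n := hm ▸ Nat.mul_div_cancel' (Nat.gcd_dvd_left _ _)
  have hm0 : m ≠ 0 := right_ne_zero_of_mul (hdm ▸ hn.ne')
  have hgcd (s : ℕ) (hs : s ≠ 0) : Nat.gcd n (Nat.card F ^ s - 1) = d * Nat.gcd s m := by
    rw [Nat.gcd_pow_sub_one_eq_gcd_mul hn.ne' Finite.one_lt_card h2 h1 hs,
      Nat.gcd_mul_eq_gcd_mul_gcd_div, hm]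
  have hsq : Squarefree (X ^ n - 1 : F[X]) := squarefree_X_pow_sub_one <|
    FiniteField.natCast_ne_zero_of_coprime_card <|
      Nat.coprime_of_prod_primeFactors_dvd_sub_one hn.ne' Nat.card_pos.ne' h2
  refine ⟨fun t ht => ?_, fun f _ hf hfn => ?_⟩
  · have hset : {f : F[X] | f.Monic ∧ Irreducible f ∧ f ∣ X ^ n - 1 ∧ f.natDegree = t}
        = ↑{f ∈ primeFactors (X ^ n - 1 : F[X]) | f.natDegree = t} := by
      ext f
      simp only [Set.mem_ofPred_eq, coe_filter, mem_primeFactors_iff hsq.ne_zero]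
      tauto
    have ht0 : 0 < t := Nat.pos_of_dvd_of_pos ht (Nat.pos_of_ne_zero hm0)
    have hcount : (t * #{f ∈ primeFactors (X ^ n - 1 : F[X]) | f.natDegree = t} : ℚ)
        = d * t.totient := by
      exact_mod_cast (mul_card_primeFactors_X_pow_sub_one_eq hsq hgcd ht0).trans (if_pos ht)
    rw [hset, Set.ncard_coe_finset]
    field_simp
    linear_combination hcount
  · have hiff := hf.dvd_X_pow_gcd_card_pow_sub_one_iff hn.ne' m
    rw [hgcd m hm0, Nat.gcd_self, hdm] at hiff
    exact (hiff.mp hfn).2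
end

section
/- Let F_q be a finite field and n a positive integer such that (1) q ≡ 3 (mod 4) and 8 divides n, and (2) rad(n) divides q − 1. Then every monic irreducible factor f of x^n − 1 in F_q[x] is of one of the following two types: (a) f = x^t − a for some positive integer t and a ∈ F_q^* such that x^t − a is irreducible in F_q[x] and divides x^n − 1 in F_q[x]; or (b) f = x^{2t} − (a + a^q)·x^t + a^{q+1} for some positive integer t and some a ∈ F_{q²} \ F_q such that x^t − a is irreducible in F_{q²}[x] and divides x^n − 1 in F_{q²}[x]. -/
/-!
Over `𝔽_{q²}` the hypotheses give `rad n ∣ q² - 1` and `4 ∣ q² - 1`, so by lifting the exponent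
the order of `q²` modulo any `m ∣ n` is `m / gcd(m, q² - 1)`. Hence if a root `α` of an
irreducible factor `g` of `X^n - 1` over `𝔽_{q²}` has order `m`, then `t = m / gcd(m, q² - 1)`
divides `deg g`, while `(α^t)^(q² - 1) = 1` puts `α^t` in `𝔽_{q²}`; thus `g ∣ X^t - α^t` forces
`g = X^t - α^t`. An irreducible `f` over `𝔽_q` with such a factor `g` is `g` itself when the
constant term of `g` lies in `𝔽_q`, and otherwise the product of `g` and its conjugate under
`x ↦ x^q`, the smallest multiple of `g` invariant under `x ↦ x^q`.
-/

open Polynomial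

theorem Nat.emultiplicity_pow_sub_one {p Q : ℕ} (hp : p.Prime) (hQ : 0 < Q) (hpQ : p ∣ Q - 1)
    (h4 : p = 2 → 4 ∣ Q - 1) (s : ℕ) :
    emultiplicity p (Q ^ s - 1) = emultiplicity p (Q - 1) + emultiplicity p s := by
  have hpQ' : ¬ p ∣ Q := fun h => hp.one_lt.ne' <| Nat.dvd_one.1 <| by
    simpa [Nat.sub_sub_self hQ] using Nat.dvd_sub h hpQ
  rcases hp.eq_two_or_odd' with rfl | hodd
  · have h4' : (4 : ℤ) ∣ (Q : ℤ) - 1 := by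
      rw [← Nat.cast_one, ← Nat.cast_sub hQ]; exact_mod_cast h4 rfl
    rw [← Int.natCast_emultiplicity, ← Int.natCast_emultiplicity, ← Int.natCast_emultiplicity,
      Nat.cast_sub hQ, Nat.cast_sub (Nat.one_le_pow _ _ hQ)]
    simpa using Int.two_pow_sub_pow' (x := Q) (y := 1) s h4' (by exact_mod_cast hpQ')
  · simpa using Nat.emultiplicity_pow_sub_pow hp hodd (y := 1) (by simpa using hpQ) hpQ' s

theorem Nat.factorization_pow_sub_one_s10 {p Q s : ℕ} (hp : p.Prime) (hQ : 1 < Q) (hs : s ≠ 0)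
    (hpQ : p ∣ Q - 1) (h4 : p = 2 → 4 ∣ Q - 1) :
    (Q ^ s - 1).factorization p = (Q - 1).factorization p + s.factorization p := by
  have := Fact.mk hp
  have hQs : Q ^ s - 1 ≠ 0 := Nat.sub_ne_zero_of_lt (Nat.one_lt_pow hs hQ)
  simp only [Nat.factorization_def _ hp, ← Nat.cast_inj (R := ℕ∞), Nat.cast_add,
    padicValNat_eq_emultiplicity hQs, padicValNat_eq_emultiplicity hs,
    padicValNat_eq_emultiplicity (Nat.sub_ne_zero_of_lt hQ)]
  exact Nat.emultiplicity_pow_sub_one hp (by omega) hpQ h4 s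

/-- In fact `m / gcd(m, Q - 1)` is the multiplicative order of `Q` modulo `m`. -/
theorem Nat.div_gcd_sub_one_dvd_of_dvd_pow_sub_one_s10 {Q m s : ℕ} (hQ : 1 < Q) (hs : s ≠ 0)
    (hm : m ≠ 0) (hrad : ∀ p, p.Prime → p ∣ m → p ∣ Q - 1) (h4 : 4 ∣ Q - 1)
    (hdvd : m ∣ Q ^ s - 1) : m / m.gcd (Q - 1) ∣ s := by
  have hQ1 : Q - 1 ≠ 0 := by omega
  have hgcd : m.gcd (Q - 1) ∣ m := Nat.gcd_dvd_left _ _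
  have hdiv : m / m.gcd (Q - 1) ≠ 0 :=
    (Nat.div_ne_zero_iff_of_dvd hgcd).2 ⟨hm, by simp [hm]⟩
  rw [← Nat.factorization_le_iff_dvd hdiv hs, Nat.factorization_div hgcd, Nat.factorization_gcd hm hQ1]
  intro p
  simp only [Finsupp.tsub_apply, Finsupp.inf_apply]
  by_cases hpm : p.Prime ∧ p ∣ m
  · have hle := (Nat.factorization_le_iff_dvd hm
      (Nat.sub_ne_zero_of_lt (Nat.one_lt_pow hs hQ))).2 hdvd p
    rw [Nat.factorization_pow_sub_one_s10 hpm.1 hQ hs (hrad p hpm.1 hpm.2) (fun _ => h4)] at hle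
    omega
  · rw [(Nat.factorization_eq_zero_iff m p).2 (by tauto)]
    simp

theorem Polynomial.Monic.eq_of_dvd_of_irreducible {R : Type*} [CommSemiring R] {p f : R[X]}
    (hpm : p.Monic) (hfm : f.Monic) (hfi : Irreducible f) (hp : ¬ IsUnit p) (hpf : p ∣ f) :
    p = f :=
  (eq_of_monic_of_associated hfm hpm ((hfi.dvd_iff.1 hpf).resolve_left hp)).symm

theorem pow_orderOf_div_gcd_pow_eq_one {G : Type*} [Monoid G] (x : G) (k : ℕ) :
    (x ^ (orderOf x / (orderOf x).gcd k)) ^ k = 1 := by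
  rw [← pow_mul, ← orderOf_dvd_iff_pow_eq_one, ← Nat.mul_div_right_comm (Nat.gcd_dvd_left _ _),
    Nat.mul_div_assoc _ (Nat.gcd_dvd_right _ _)]
  exact dvd_mul_right _ _

namespace FiniteField

variable {K L : Type*} [Field K] [Fintype K] [Field L] [Algebra K L]

theorem mem_range_algebraMap_of_pow_card_eq_self [Finite L] {x : L}
    (hx : x ^ Fintype.card K = x) : x ∈ Set.range (algebraMap K L) := by
  have : Module.Finite K L := .of_finite
  rw [IsGalois.mem_range_algebraMap_iff_fixed]
  intro g
  obtain ⟨⟨i, -⟩, rfl⟩ := (bijective_frobeniusAlgEquivOfAlgebraic_pow K L).2 g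
  rw [AlgEquiv.coe_pow]
  exact Function.iterate_fixed hx i

theorem orderOf_root_dvd_card_pow_natDegree_sub_one {g : K[X]} (hgm : g.Monic)
    (hgi : Irreducible g) (hα : AdjoinRoot.root g ≠ 0) :
    orderOf (AdjoinRoot.root g) ∣ Fintype.card K ^ g.natDegree - 1 := by
  have := Fact.mk hgi
  let pb := AdjoinRoot.powerBasis' hgm
  have : Module.Finite K (AdjoinRoot g) := pb.finite
  have : Finite (AdjoinRoot g) := Module.finite_of_finite K
  let := Fintype.ofFinite (AdjoinRoot g)
  have hcard : Fintype.card (AdjoinRoot g) = Fintype.card K ^ g.natDegree := by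
    rw [Module.card_eq_pow_finrank (K := K), pb.finrank]
    rfl
  exact hcard ▸ orderOf_dvd_of_pow_eq_one (pow_card_sub_one_eq_one _ hα)

theorem exists_eq_X_pow_sub_C_of_dvd_X_pow_sub_one {n : ℕ} (hn : n ≠ 0)
    (hrad : ∀ p, p.Prime → p ∣ n → p ∣ Fintype.card K - 1) (h4 : 4 ∣ Fintype.card K - 1)
    {g : K[X]} (hgm : g.Monic) (hgi : Irreducible g) (hgd : g ∣ X ^ n - 1) :
    ∃ t a, 0 < t ∧ a ≠ 0 ∧ g = X ^ t - C a := by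
  have := Fact.mk hgi
  have : Module.Finite K (AdjoinRoot g) := (AdjoinRoot.powerBasis' hgm).finite
  have : Finite (AdjoinRoot g) := Module.finite_of_finite K
  set α := AdjoinRoot.root g
  have hαn : α ^ n = 1 := by
    simpa [sub_eq_zero] using AdjoinRoot.mk_eq_zero.2 hgd
  have hα0 : α ≠ 0 := by
    rintro h
    simp [h, hn] at hαn
  have hm : orderOf α ≠ 0 :=
    (isOfFinOrder_iff_pow_eq_one.2 ⟨n, Nat.pos_of_ne_zero hn, hαn⟩).orderOf_pos.ne'
  set t := orderOf α / (orderOf α).gcd (Fintype.card K - 1)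
  have ht : 0 < t := Nat.div_pos (Nat.gcd_le_left _ (Nat.pos_of_ne_zero hm))
    (Nat.gcd_pos_of_pos_left _ (Nat.pos_of_ne_zero hm))
  have hts : t ∣ g.natDegree := Nat.div_gcd_sub_one_dvd_of_dvd_pow_sub_one_s10 Fintype.one_lt_card
    hgi.natDegree_pos.ne' hm
    (fun p hp hpm => hrad p hp (hpm.trans (orderOf_dvd_of_pow_eq_one hαn))) h4
    (orderOf_root_dvd_card_pow_natDegree_sub_one hgm hgi hα0)
  -- `α ^ t` lies in `K` because its order divides `#K - 1`.
  obtain ⟨b, hb⟩ := mem_range_algebraMap_of_pow_card_eq_self (K := K) (x := α ^ t) <| by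
    rw [← Nat.sub_add_cancel Fintype.card_pos, pow_succ, pow_orderOf_div_gcd_pow_eq_one, one_mul]
  have hb0 : b ≠ 0 := by
    rintro rfl
    exact pow_ne_zero t hα0 (by simpa using hb.symm)
  have hgb : g ∣ X ^ t - C b := by
    rw [← AdjoinRoot.mk_eq_zero, map_sub, map_pow, AdjoinRoot.mk_X, AdjoinRoot.mk_C,
      ← AdjoinRoot.algebraMap_eq, hb, sub_self]
  refine ⟨t, b, ht, hb0, (eq_of_monic_of_dvd_of_natDegree_le hgm (monic_X_pow_sub_C b ht.ne')
    hgb ?_).symm⟩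
  rw [natDegree_X_pow_sub_C]
  exact Nat.le_of_dvd hgi.natDegree_pos hts

theorem mem_lifts_of_map_frobeniusAlgHom_eq [Finite L] {p : L[X]}
    (hp : p.map (frobeniusAlgHom K L : L →+* L) = p) : p ∈ lifts (algebraMap K L) := by
  rw [lifts_iff_coeff_lifts]
  intro i
  apply mem_range_algebraMap_of_pow_card_eq_self
  simpa using congrArg (coeff · i) hp

theorem map_frobeniusAlgHom_map_algebraMap (f : K[X]) :
    (f.map (algebraMap K L)).map (frobeniusAlgHom K L : L →+* L) = f.map (algebraMap K L) := by
  rw [map_map, AlgHom.comp_algebraMap]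

theorem frobeniusAlgHom_comp_self_of_card_eq_sq [Fintype L]
    (hL : Fintype.card L = Fintype.card K ^ 2) :
    (frobeniusAlgHom K L : L →+* L).comp (frobeniusAlgHom K L) = RingHom.id L := by
  ext x
  simp [← pow_mul, ← sq, ← hL, pow_card]

theorem map_algebraMap_eq_mul_map_frobeniusAlgHom [Fintype L]
    (hL : Fintype.card L = Fintype.card K ^ 2) {f : K[X]} (hfm : f.Monic) (hfi : Irreducible f)
    {g : L[X]} (hgm : g.Monic) (hgi : Irreducible g) (hgf : g ∣ f.map (algebraMap K L))
    (hne : g.map (frobeniusAlgHom K L : L →+* L) ≠ g) :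
    f.map (algebraMap K L) = g * g.map (frobeniusAlgHom K L : L →+* L) := by
  set σ : L →+* L := ↑(frobeniusAlgHom K L)
  have hσgf : g.map σ ∣ f.map (algebraMap K L) :=
    map_frobeniusAlgHom_map_algebraMap (L := L) f ▸ Polynomial.map_dvd σ hgf
  have hcop : IsCoprime g (g.map σ) := (EuclideanDomain.dvd_or_coprime _ _ hgi).resolve_left
    fun h => hne (eq_of_monic_of_dvd_of_natDegree_le hgm (hgm.map σ) h (natDegree_map σ).le)
  -- `g` times its conjugate is Frobenius-invariant, hence defined over `K`, hence equal to `f`.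
  have hfix : (g * g.map σ).map σ = g * g.map σ := by
    rw [Polynomial.map_mul, map_map, frobeniusAlgHom_comp_self_of_card_eq_sq hL, map_id,
      mul_comm]
  obtain ⟨h, hh⟩ := (mem_lifts _).1 (mem_lifts_of_map_frobeniusAlgHom_eq (K := K) hfix)
  have hhm : h.Monic := monic_of_injective (algebraMap K L).injective (hh ▸ hgm.mul (hgm.map σ))
  have hhu : ¬ IsUnit h := fun hu => by
    have := hu.map (mapRingHom (algebraMap K L))
    rw [coe_mapRingHom, hh] at this
    exact hgi.not_isUnit (isUnit_of_mul_isUnit_left this)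
  have hhf : h ∣ f := by
    rw [← map_dvd_map' (algebraMap K L), hh]
    exact hcop.mul_dvd hgf hσgf
  rw [← hh, hhm.eq_of_dvd_of_irreducible hfm hfi hhu hhf]

end FiniteField

open FiniteField

theorem irreducible_factors_binomial_or_trinomial_general {F F2 : Type*}
    [Field F] [Fintype F] [Field F2] [Fintype F2] [Algebra F F2]
    (q : ℕ) (hq : q = Fintype.card F) (hq2 : Fintype.card F2 = q ^ 2)
    (n : ℕ) (hn : 0 < n) (h1 : q % 4 = 3)
    (h3 : (∏ p ∈ n.primeFactors, p) ∣ (q - 1)) :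
    ∀ f : Polynomial F, f.Monic → Irreducible f → f ∣ (X ^ n - 1 : Polynomial F) →
      (∃ (t : ℕ) (a : F), 0 < t ∧ a ≠ 0 ∧ f = X ^ t - C a ∧
          Irreducible (X ^ t - C a : Polynomial F) ∧
          (X ^ t - C a) ∣ (X ^ n - 1 : Polynomial F)) ∨
      (∃ (t : ℕ) (a : F2), 0 < t ∧ a ∉ Set.range (algebraMap F F2) ∧
          Irreducible (X ^ t - C a : Polynomial F2) ∧
          (X ^ t - C a) ∣ (X ^ n - 1 : Polynomial F2) ∧
          f.map (algebraMap F F2) =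
            X ^ (2 * t) - C (a + a ^ q) * X ^ t + C (a ^ (q + 1))) := by
  intro f hfm hfi hfd
  subst hq
  have hrad (p : ℕ) (hp : p.Prime) (hpn : p ∣ n) : p ∣ Fintype.card F2 - 1 :=
    ((Finset.dvd_prod_of_mem _ (Nat.mem_primeFactors.2 ⟨hp, hpn, hn.ne'⟩)).trans h3).trans
      (by simpa [hq2] using Nat.sub_dvd_pow_sub_pow (Fintype.card F) 1 2)
  have h4 : 4 ∣ Fintype.card F2 - 1 :=
    hq2 ▸ (dvd_trans (by norm_num) (Nat.eight_dvd_sq_sub_one_of_odd (Nat.odd_iff.2 (by omega))))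
  have hfd2 : f.map (algebraMap F F2) ∣ X ^ n - 1 := by
    simpa using Polynomial.map_dvd (algebraMap F F2) hfd
  obtain ⟨g, hgm, hgi, hgf⟩ := exists_monic_irreducible_factor (f.map (algebraMap F F2))
    (not_isUnit_of_natDegree_pos _ (by simpa using hfi.natDegree_pos))
  obtain ⟨t, a, ht, ha0, rfl⟩ :=
    exists_eq_X_pow_sub_C_of_dvd_X_pow_sub_one hn.ne' hrad h4 hgm hgi (hgf.trans hfd2)
  by_cases ha : a ∈ Set.range (algebraMap F F2)
  · left
    obtain ⟨a, rfl⟩ := ha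
    obtain rfl := (monic_X_pow_sub_C a ht.ne').eq_of_dvd_of_irreducible hfm hfi
      (not_isUnit_of_natDegree_pos _ (by rwa [natDegree_X_pow_sub_C]))
      (by rw [← map_dvd_map' (algebraMap F F2)]; simpa using hgf)
    exact ⟨t, a, ht, by simpa using ha0, rfl, hfi, hfd⟩
  · right
    refine ⟨t, a, ht, ha, hgi, hgf.trans hfd2, ?_⟩
    have hne : (X ^ t - C a).map (frobeniusAlgHom F F2 : F2 →+* F2) ≠ X ^ t - C a := by
      intro h
      simp only [Polynomial.map_sub, Polynomial.map_pow, map_X, map_C, sub_right_inj, C_inj] at h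
      exact ha (mem_range_algebraMap_of_pow_card_eq_self (by simpa using h))
    rw [map_algebraMap_eq_mul_map_frobeniusAlgHom hq2 hfm hfi hgm hgi hgf hne]
    simp only [Polynomial.map_sub, Polynomial.map_pow, map_X, map_C]
    simp only [RingHom.coe_coe, coe_frobeniusAlgHom, C_add, C_mul, pow_succ', C_pow]
    ring

/-- If `q ≡ 3 (mod 4)`, `8 ∣ n` and `rad(n) ∣ q - 1`, then every monic irreducible factor
of `x^n - 1` over `F_q` is either a binomial `x^t - a` (irreducible and dividing `x^n - 1`
over `F_q`), or a trinomial `x^{2t} - (a + a^q)x^t + a^{q+1}` where `a ∈ F_{q²} \ F_q` and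
`x^t - a` is irreducible and divides `x^n - 1` over `F_{q²}`. -/
theorem irreducible_factors_binomial_or_trinomial {F F2 : Type*}
    [Field F] [Fintype F] [Field F2] [Fintype F2] [Algebra F F2]
    (q : ℕ) (hq : q = Fintype.card F) (hq2 : Fintype.card F2 = q ^ 2)
    (n : ℕ) (hn : 0 < n) (h1 : q % 4 = 3) (h2 : 8 ∣ n)
    (h3 : (∏ p ∈ n.primeFactors, p) ∣ (q - 1)) :
    ∀ f : Polynomial F, f.Monic → Irreducible f → f ∣ (X ^ n - 1 : Polynomial F) →
      (∃ (t : ℕ) (a : F), 0 < t ∧ a ≠ 0 ∧ f = X ^ t - C a ∧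
          Irreducible (X ^ t - C a : Polynomial F) ∧
          (X ^ t - C a) ∣ (X ^ n - 1 : Polynomial F)) ∨
      (∃ (t : ℕ) (a : F2), 0 < t ∧ a ∉ Set.range (algebraMap F F2) ∧
          Irreducible (X ^ t - C a : Polynomial F2) ∧
          (X ^ t - C a) ∣ (X ^ n - 1 : Polynomial F2) ∧
          f.map (algebraMap F F2) =
            X ^ (2 * t) - C (a + a ^ q) * X ^ t + C (a ^ (q + 1))) :=
  irreducible_factors_binomial_or_trinomial_general q hq hq2 n hn h1 h3
end

section
/- Let F_q be a finite field and n a positive integer with q ≡ 3 (mod 4), 8 | n, and rad(n) dividing q − 1. Set r = min(ν_2(n/2), ν_2(q + 1)) and l_2 = (q² − 1)/gcd(q² − 1, n). Then gcd(n/2, q + 1) = 2^r and gcd(q + 1, l_2) = (q + 1)/2^r. -/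
/-!
A prime dividing both `n` and `q + 1` divides `rad n ∣ q - 1`, hence divides `2`. So `n` and
`q + 1` share only the prime `2`, and both gcds can be compared prime by prime: at odd primes
one side has valuation zero, and at `2` everything follows from `ν₂(q - 1) = 1`, which is
where `q ≡ 3 (mod 4)` enters.
-/

theorem Nat.Prime.eq_two_of_dvd_sub_one_of_dvd_add_one {p q : ℕ} (hp : p.Prime)
    (hsub : p ∣ q - 1) (hadd : p ∣ q + 1) : p = 2 := by
  have hp2 : p ∣ 2 := by
    rcases q with _ | q
    · exact absurd (Nat.le_of_dvd one_pos hadd) hp.one_lt.not_ge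
    · have h := Nat.dvd_sub hadd hsub
      rwa [show q + 1 + 1 - (q + 1 - 1) = 2 by omega] at h
  exact (Nat.prime_dvd_prime_iff_eq hp Nat.prime_two).1 hp2

theorem Nat.factorization_two_sub_one_of_mod_four_eq_three {q : ℕ} (hq : q % 4 = 3) :
    (q - 1).factorization 2 = 1 := by
  obtain ⟨m, hm, hmodd⟩ : ∃ m, q - 1 = 2 * m ∧ ¬ 2 ∣ m := ⟨(q - 1) / 2, by omega, by omega⟩
  rw [hm, Nat.factorization_mul two_ne_zero (by rintro rfl; simp at hmodd), Finsupp.add_apply,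
    Nat.Prime.factorization_self Nat.prime_two, Nat.factorization_eq_zero_of_not_dvd hmodd]

theorem Nat.factorization_div_gcd_apply {a b : ℕ} (ha : a ≠ 0) (hb : b ≠ 0) (p : ℕ) :
    (a / a.gcd b).factorization p = a.factorization p - b.factorization p := by
  rw [Nat.factorization_div (Nat.gcd_dvd_left a b), Nat.factorization_gcd ha hb,
    Finsupp.tsub_apply, Finsupp.inf_apply]
  omega

section OnlyTwoInCommon

variable {n a : ℕ}

theorem min_factorization_eq_zero_of_ne_two
    (hcop : ∀ p, p.Prime → p ∣ n → p ∣ a → p = 2) {p : ℕ} (hp : p ≠ 2) :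
    min (n.factorization p) (a.factorization p) = 0 := by
  by_contra h
  have hpn : 0 < n.factorization p := by omega
  have hpa : 0 < a.factorization p := by omega
  exact hp <| hcop p (Nat.prime_of_mem_primeFactors (Finsupp.mem_support_iff.2 hpn.ne'))
    (Nat.dvd_of_factorization_pos hpn.ne') (Nat.dvd_of_factorization_pos hpa.ne')

theorem gcd_eq_two_pow_of_only_two_in_common (hn : n ≠ 0) (ha : a ≠ 0)
    (hcop : ∀ p, p.Prime → p ∣ n → p ∣ a → p = 2) :
    n.gcd a = 2 ^ min (n.factorization 2) (a.factorization 2) := by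
  refine Nat.eq_of_factorization_eq (Nat.gcd_ne_zero_left hn) (by positivity) fun p => ?_
  rw [Nat.factorization_gcd hn ha, Finsupp.inf_apply, Nat.Prime.factorization_pow Nat.prime_two]
  by_cases hp : p = 2
  · subst hp
    rw [Finsupp.single_eq_same]
  · rw [Finsupp.single_eq_of_ne hp]
    exact min_factorization_eq_zero_of_ne_two hcop hp

theorem gcd_mul_div_gcd_eq_of_only_two_in_common {b : ℕ} (hn : n ≠ 0) (ha : a ≠ 0) (hb : b ≠ 0)
    (h2n : 2 ∣ n) (hb2 : b.factorization 2 = 1) (hcop : ∀ p, p.Prime → p ∣ n → p ∣ a → p = 2) :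
    a.gcd (a * b / (a * b).gcd n) = a / 2 ^ min ((n / 2).factorization 2) (a.factorization 2) := by
  set r := min ((n / 2).factorization 2) (a.factorization 2)
  have hr : 2 ^ r ∣ a := (pow_dvd_pow 2 (min_le_right _ _)).trans (Nat.ordProj_dvd a 2)
  have hab : a * b ≠ 0 := mul_ne_zero ha hb
  have hl : a * b / (a * b).gcd n ≠ 0 :=
    (Nat.div_ne_zero_iff_of_dvd (Nat.gcd_dvd_left _ _)).2 ⟨hab, Nat.gcd_ne_zero_left hab⟩
  refine Nat.eq_of_factorization_eq (Nat.gcd_ne_zero_left ha)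
    ((Nat.div_ne_zero_iff_of_dvd hr).2 ⟨ha, by positivity⟩) fun p => ?_
  rw [Nat.factorization_gcd ha hl, Finsupp.inf_apply, Nat.factorization_div_gcd_apply hab hn,
    Nat.factorization_mul ha hb, Nat.factorization_div hr, Finsupp.tsub_apply, Finsupp.add_apply,
    Nat.Prime.factorization_pow Nat.prime_two]
  by_cases hp : p = 2
  · subst hp
    have hn2 : (n / 2).factorization 2 = n.factorization 2 - 1 := by
      rw [Nat.factorization_div h2n, Finsupp.tsub_apply, Nat.Prime.factorization_self Nat.prime_two]
    have hn1 : 1 ≤ n.factorization 2 :=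
      (Nat.prime_two.pow_dvd_iff_le_factorization hn).1 (by simpa using h2n)
    simp only [Finsupp.single_eq_same, hb2, r, hn2]
    omega
  · have := min_factorization_eq_zero_of_ne_two hcop hp
    rw [Finsupp.single_eq_of_ne hp]
    omega

end OnlyTwoInCommon

theorem gcd_two_power_identities_general
    (q : ℕ) (n : ℕ) (hn : 0 < n)
    (h1 : q % 4 = 3) (h2 : 8 ∣ n)
    (h3 : (∏ p ∈ n.primeFactors, p) ∣ (q - 1))
    (r l2 : ℕ)
    (hr : r = min ((n / 2).factorization 2) ((q + 1).factorization 2))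
    (hl2 : l2 = (q ^ 2 - 1) / Nat.gcd (q ^ 2 - 1) n) :
    Nat.gcd (n / 2) (q + 1) = 2 ^ r ∧ Nat.gcd (q + 1) l2 = (q + 1) / 2 ^ r := by
  have h2n : 2 ∣ n := (by norm_num : 2 ∣ 8).trans h2
  have hcop : ∀ p, p.Prime → p ∣ n → p ∣ q + 1 → p = 2 := fun p hp hpn =>
    hp.eq_two_of_dvd_sub_one_of_dvd_add_one
      ((Finset.dvd_prod_of_mem _ (Nat.mem_primeFactors.2 ⟨hp, hpn, hn.ne'⟩)).trans h3)
  have hsq : q ^ 2 - 1 = (q + 1) * (q - 1) := by simpa using Nat.sq_sub_sq q 1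
  subst hr hl2
  rw [hsq]
  refine ⟨gcd_eq_two_pow_of_only_two_in_common (by omega) (by omega)
    fun p hp hpn => hcop p hp (hpn.trans (Nat.div_dvd_of_dvd h2n)), ?_⟩
  exact gcd_mul_div_gcd_eq_of_only_two_in_common hn.ne' (by omega) (by omega) h2n
    (Nat.factorization_two_sub_one_of_mod_four_eq_three h1) hcop

/-- If `q ≡ 3 (mod 4)`, `8 ∣ n` and `rad(n) ∣ q - 1`, then with
`r = min(ν₂(n/2), ν₂(q+1))` and `l₂ = (q² - 1)/gcd(q² - 1, n)` one has
`gcd(n/2, q+1) = 2^r` and `gcd(q+1, l₂) = (q+1)/2^r`. -/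
theorem gcd_two_power_identities {F : Type*} [Field F] [Fintype F]
    (q : ℕ) (hq : q = Fintype.card F) (n : ℕ) (hn : 0 < n)
    (h1 : q % 4 = 3) (h2 : 8 ∣ n)
    (h3 : (∏ p ∈ n.primeFactors, p) ∣ (q - 1))
    (r l2 : ℕ)
    (hr : r = min ((n / 2).factorization 2) ((q + 1).factorization 2))
    (hl2 : l2 = (q ^ 2 - 1) / Nat.gcd (q ^ 2 - 1) n) :
    Nat.gcd (n / 2) (q + 1) = 2 ^ r ∧ Nat.gcd (q + 1) l2 = (q + 1) / 2 ^ r :=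
  gcd_two_power_identities_general q n hn h1 h2 h3 r l2 hr hl2
end

section
/- Let F_q be a finite field and n a positive integer with q ≡ 3 (mod 4), 8 | n, and rad(n) dividing q − 1. Set m = n/gcd(n, q² − 1). Then for each odd divisor t of m, the number of distinct monic irreducible factors of x^n − 1 in F_q[x] of degree t that are binomials (i.e. of the form x^t − a with a ∈ F_q^*) equals (φ(t)/t) · gcd(n, q − 1). -/
/-!
A binomial factor `X ^ t - a` of `X ^ n - 1` is determined by the unit `a`, and it divides
`X ^ n - 1` iff `a ^ (n / t) = 1`. As `t` is odd, `X ^ t - a` is irreducible iff `a` is not a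
`p`-th power for any prime `p ∣ t`, which in the cyclic group `F_qˣ` means
`v_p(ord a) = v_p(q - 1)`. For a prime `p ∣ t`, `p ∣ m = n / gcd(n, q² - 1)` forces
`v_p(n) = v_p(q² - 1) + v_p(m) ≥ v_p(q - 1) + v_p(t)`; hence `gcd(n / t, q - 1) = d`, where
`d = gcd(n, q - 1)`, and `v_p(d) = v_p(q - 1)`. So the admissible units are those with
`r ∣ ord a ∣ d`, `r` the `t`-part of `d`. A cyclic group has `∑_{r ∣ e ∣ d} φ(e) = φ(r) · d / r`
of them, and `φ(r) / r = φ(t) / t` because `r` and `t` have the same prime factors.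
-/

open Polynomial Finset

namespace Nat

/-- The `t`-part of `d`: the largest divisor of `d` all of whose prime factors divide `t`. -/
def primePart (t d : ℕ) : ℕ := (d.factorization.filter (· ∣ t)).prod (· ^ ·)

theorem prime_of_mem_support_filter_factorization {t d p : ℕ}
    (hp : p ∈ (d.factorization.filter (· ∣ t)).support) : p.Prime := by
  rw [Finsupp.support_filter] at hp
  exact prime_of_mem_primeFactors (mem_filter.1 hp).1

theorem factorization_primePart (t d : ℕ) :
    (primePart t d).factorization = d.factorization.filter (· ∣ t) :=
  prod_pow_factorization_eq_self fun _ => prime_of_mem_support_filter_factorization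

theorem primePart_ne_zero (t d : ℕ) : primePart t d ≠ 0 :=
  Finsupp.prod_ne_zero_iff.2 fun _ hp =>
    pow_ne_zero _ (prime_of_mem_support_filter_factorization hp).ne_zero

theorem primePart_dvd_iff {t d e : ℕ} (he : e ≠ 0) :
    primePart t d ∣ e ↔ ∀ p, p.Prime → p ∣ t → d.factorization p ≤ e.factorization p := by
  rw [← factorization_le_iff_dvd (primePart_ne_zero t d) he, factorization_primePart,
    Finsupp.le_def]
  refine forall_congr' fun p => ?_
  rw [Finsupp.filter_apply]
  by_cases hp : p.Prime
  · by_cases hpt : p ∣ t <;> simp [hp, hpt]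
  · simp [hp, factorization_eq_zero_of_not_prime]

theorem primePart_dvd (t d : ℕ) : primePart t d ∣ d := by
  rcases eq_or_ne d 0 with rfl | hd
  · exact dvd_zero _
  · exact (primePart_dvd_iff hd).2 fun _ _ _ => le_rfl

theorem coprime_primePart_div (t d : ℕ) : (primePart t d).Coprime (d / primePart t d) := by
  refine coprime_of_dvd fun p hp hpr hpd => ?_
  have hr := (hp.dvd_iff_one_le_factorization (primePart_ne_zero t d)).1 hpr
  rw [factorization_primePart, Finsupp.filter_apply] at hr
  have hpt : p ∣ t := by by_contra hpt; simp [hpt] at hr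
  rw [if_pos hpt] at hr
  have hd : d ≠ 0 := by rintro rfl; simp at hr
  have hdr : d / primePart t d ≠ 0 := (div_pos (le_of_dvd (pos_of_ne_zero hd)
    (primePart_dvd t d)) (pos_of_ne_zero (primePart_ne_zero t d))).ne'
  have := (hp.dvd_iff_one_le_factorization hdr).1 hpd
  rw [factorization_div (primePart_dvd t d), factorization_primePart, Finsupp.tsub_apply,
    Finsupp.filter_apply, if_pos hpt] at this
  omega

theorem primeFactors_primePart {t d : ℕ} (ht : t ≠ 0) (hd : d ≠ 0)
    (htd : ∀ p, p.Prime → p ∣ t → p ∣ d) : (primePart t d).primeFactors = t.primeFactors := by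
  ext p
  rw [← support_factorization, factorization_primePart, Finsupp.support_filter, mem_filter,
    support_factorization, mem_primeFactors, mem_primeFactors]
  exact ⟨fun ⟨⟨hp, _, _⟩, hpt⟩ => ⟨hp, hpt, ht⟩, fun ⟨hp, hpt, _⟩ => ⟨⟨hp, htd p hp hpt, hd⟩, hpt⟩⟩

theorem totient_div_eq_of_primeFactors_eq {a b : ℕ} (ha : a ≠ 0) (hb : b ≠ 0)
    (h : a.primeFactors = b.primeFactors) : (a.totient : ℚ) / a = b.totient / b := by
  rw [totient_eq_mul_prod_factors, totient_eq_mul_prod_factors, h]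
  field_simp

theorem sum_totient_divisors_filter_dvd {r d : ℕ} (hrd : r ∣ d) (hco : r.Coprime (d / r)) :
    ∑ e ∈ d.divisors with r ∣ e, e.totient = r.totient * (d / r) := by
  rcases eq_or_ne d 0 with rfl | hd
  · simp
  obtain ⟨s, rfl⟩ := hrd
  have hr : r ≠ 0 := left_ne_zero_of_mul hd
  rw [Nat.mul_div_cancel_left s (pos_of_ne_zero hr)] at hco ⊢
  have himage : {e ∈ (r * s).divisors | r ∣ e} = s.divisors.image (r * ·) := by
    ext e
    simp only [mem_filter, mem_divisors, mem_image]
    constructor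
    · rintro ⟨⟨he, -⟩, k, rfl⟩
      exact ⟨k, ⟨Nat.dvd_of_mul_dvd_mul_left (pos_of_ne_zero hr) he,
        right_ne_zero_of_mul hd⟩, rfl⟩
    · rintro ⟨k, ⟨hk, -⟩, rfl⟩
      exact ⟨⟨mul_dvd_mul_left r hk, hd⟩, dvd_mul_right r k⟩
  rw [himage, sum_image fun _ _ _ _ h => Nat.eq_of_mul_eq_mul_left (pos_of_ne_zero hr) h]
  conv_rhs => rw [← sum_totient s, mul_sum]
  exact sum_congr rfl fun k hk => totient_mul (hco.coprime_dvd_right (dvd_of_mem_divisors hk))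

theorem dvd_div_prime_iff_factorization_lt {e N p : ℕ} (hp : p.Prime) (hpN : p ∣ N)
    (hN : N ≠ 0) (he : e ∣ N) : e ∣ N / p ↔ e.factorization p < N.factorization p := by
  obtain ⟨k, rfl⟩ := he
  have he : e ≠ 0 := left_ne_zero_of_mul hN
  have hk : k ≠ 0 := right_ne_zero_of_mul hN
  rw [Nat.dvd_div_iff_mul_dvd hpN, mul_comm p, Nat.mul_dvd_mul_iff_left (pos_of_ne_zero he),
    hp.dvd_iff_one_le_factorization hk, factorization_mul he hk, Finsupp.add_apply]
  omega

theorem factorization_eq_add_of_dvd_div_gcd {n N p : ℕ} (hn : n ≠ 0) (hN : N ≠ 0)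
    (hp : p.Prime) (hpn : p ∣ n / n.gcd N) :
    n.factorization p = N.factorization p + (n / n.gcd N).factorization p := by
  have hg := gcd_dvd_left n N
  have hpos := (hp.dvd_iff_one_le_factorization ((div_ne_zero_iff_of_dvd hg).2
    ⟨hn, gcd_ne_zero_left hn⟩)).1 hpn
  rw [factorization_div hg, Finsupp.tsub_apply, factorization_gcd hn hN,
    Finsupp.inf_apply] at hpos ⊢
  omega

theorem factorization_le_factorization_div_of_dvd_div_gcd {n N Q t p : ℕ} (hn : n ≠ 0)
    (hN : N ≠ 0) (hQN : Q ∣ N) (ht : t ∣ n / n.gcd N) (hp : p.Prime) (hpt : p ∣ t) :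
    Q.factorization p ≤ (n / t).factorization p := by
  have hm : n / n.gcd N ≠ 0 := (div_ne_zero_iff_of_dvd (gcd_dvd_left n N)).2
    ⟨hn, gcd_ne_zero_left hn⟩
  have hn_eq := factorization_eq_add_of_dvd_div_gcd hn hN hp (hpt.trans ht)
  have htm := (factorization_le_iff_dvd (ne_zero_of_dvd_ne_zero hm ht) hm).2 ht p
  have hQ := (factorization_le_iff_dvd (ne_zero_of_dvd_ne_zero hN hQN) hN).2 hQN p
  rw [factorization_div (ht.trans (div_dvd_of_dvd (gcd_dvd_left n N))), Finsupp.tsub_apply]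
  omega

theorem gcd_div_eq_gcd {n t Q : ℕ} (hn : n ≠ 0) (hQ : Q ≠ 0) (htn : t ∣ n)
    (h : ∀ p, p.Prime → p ∣ t → Q.factorization p ≤ (n / t).factorization p) :
    (n / t).gcd Q = n.gcd Q := by
  have hnt : n / t ≠ 0 := (div_ne_zero_iff_of_dvd htn).2 ⟨hn, ne_zero_of_dvd_ne_zero hn htn⟩
  refine eq_of_factorization_eq (gcd_ne_zero_right hQ) (gcd_ne_zero_right hQ) fun p => ?_
  rw [factorization_gcd hnt hQ, factorization_gcd hn hQ, Finsupp.inf_apply, Finsupp.inf_apply]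
  have hle := h p
  rw [factorization_div htn, Finsupp.tsub_apply] at hle ⊢
  by_cases hpt : 0 < t.factorization p
  · have := hle (prime_of_mem_primeFactors (Finsupp.mem_support_iff.2 hpt.ne'))
      (dvd_of_factorization_pos hpt.ne')
    omega
  · rw [Nat.eq_zero_of_not_pos hpt, Nat.sub_zero]

end Nat

theorem IsCyclic.exists_pow_eq_iff {G : Type*} [Group G] [Finite G] [IsCyclic G] {k : ℕ}
    (hk : k ∣ Nat.card G) (u : G) : (∃ v, v ^ k = u) ↔ u ^ (Nat.card G / k) = 1 := by
  constructor
  · rintro ⟨v, rfl⟩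
    rw [← pow_mul, Nat.mul_div_cancel' hk, pow_card_eq_one']
  · intro hu
    obtain ⟨l, hl⟩ := hk
    have hkl : k * l ≠ 0 := hl ▸ Nat.card_pos.ne'
    rw [hl, Nat.mul_div_cancel_left l (Nat.pos_of_ne_zero (left_ne_zero_of_mul hkl))] at hu
    obtain ⟨g, hg⟩ := IsCyclic.exists_generator (α := G)
    obtain ⟨i, rfl⟩ := mem_powers_iff_mem_zpowers.2 (hg u)
    have hord : orderOf g = k * l := (orderOf_eq_card_of_forall_mem_zpowers hg).trans hl
    have : k * l ∣ i * l := hord ▸ orderOf_dvd_of_pow_eq_one (by rwa [pow_mul])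
    obtain ⟨j, rfl⟩ := (Nat.mul_dvd_mul_iff_right
      (Nat.pos_of_ne_zero (right_ne_zero_of_mul hkl))).1 this
    exact ⟨g ^ j, by rw [← pow_mul, mul_comm]⟩

theorem IsCyclic.ncard_setOf_orderOf_dvd_and_dvd_orderOf {G : Type*} [Group G] [Finite G]
    [IsCyclic G] {r d : ℕ} (hd : d ∣ Nat.card G) (hrd : r ∣ d) (hco : r.Coprime (d / r)) :
    {u : G | orderOf u ∣ d ∧ r ∣ orderOf u}.ncard = r.totient * (d / r) := by
  classical
  have := Fintype.ofFinite G
  rw [Nat.card_eq_fintype_card] at hd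
  have hd0 : d ≠ 0 := ne_zero_of_dvd_ne_zero Fintype.card_ne_zero hd
  rw [Set.ncard_eq_toFinset_card', Set.toFinset_ofPred,
    ← Nat.sum_totient_divisors_filter_dvd hrd hco,
    card_eq_sum_card_fiberwise (f := orderOf) (t := {e ∈ d.divisors | r ∣ e})
      fun u hu => by simp_all]
  refine sum_congr rfl fun e he => ?_
  rw [mem_filter, Nat.mem_divisors] at he
  rw [← IsCyclic.card_orderOf_eq_totient (he.1.1.trans hd), filter_filter]
  congr 1
  ext u
  simp only [mem_filter, mem_univ, true_and]
  exact ⟨fun h => h.2, fun h => ⟨⟨h ▸ he.1.1, h ▸ he.2⟩, h⟩⟩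

theorem X_pow_sub_C_dvd_X_pow_sub_one_iff {R : Type*} [CommRing R] [IsDomain R] {t n : ℕ}
    (htn : t ∣ n) (ht : t ≠ 0) (a : R) :
    X ^ t - C a ∣ X ^ n - 1 ↔ a ^ (n / t) = 1 := by
  have hdvd : X ^ t - C a ∣ X ^ n - C (a ^ (n / t)) := by
    simpa [← pow_mul, Nat.mul_div_cancel' htn] using sub_dvd_pow_sub_pow (X ^ t) (C a) (n / t)
  refine ⟨fun h => ?_, fun h => by rwa [h, C_1] at hdvd⟩
  by_contra hne
  have hconst : X ^ t - C a ∣ C (a ^ (n / t) - 1) := by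
    simpa [C_sub] using dvd_sub h hdvd
  have := natDegree_le_of_dvd hconst (C_ne_zero.2 (sub_ne_zero.2 hne))
  rw [natDegree_X_pow_sub_C, natDegree_C] at this
  omega

theorem ncard_setOf_binomial_factors {F : Type*} [Field F] {t : ℕ} (ht : t ≠ 0) (g : F[X]) :
    {f : F[X] | f.Monic ∧ Irreducible f ∧ f ∣ g ∧ f.natDegree = t ∧
        ∃ a : F, a ≠ 0 ∧ f = X ^ t - C a}.ncard =
      {u : Fˣ | Irreducible (X ^ t - C (u : F)) ∧ X ^ t - C (u : F) ∣ g}.ncard := by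
  have himage : {f : F[X] | f.Monic ∧ Irreducible f ∧ f ∣ g ∧ f.natDegree = t ∧
        ∃ a : F, a ≠ 0 ∧ f = X ^ t - C a} =
      (fun u : Fˣ => X ^ t - C (u : F)) ''
        {u | Irreducible (X ^ t - C (u : F)) ∧ X ^ t - C (u : F) ∣ g} := by
    ext f
    constructor
    · rintro ⟨-, hirr, hg, -, a, ha, rfl⟩
      exact ⟨Units.mk0 a ha, ⟨hirr, hg⟩, rfl⟩
    · rintro ⟨u, ⟨hirr, hg⟩, rfl⟩
      exact ⟨monic_X_pow_sub_C _ ht, hirr, hg, natDegree_X_pow_sub_C, u, u.ne_zero, rfl⟩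
  rw [himage, Set.ncard_image_of_injective _
    fun u v h => Units.ext (C_injective (sub_right_injective h))]

namespace FiniteField

variable {F : Type*} [Field F] [Finite F]

theorem irreducible_X_pow_sub_C_iff {t : ℕ} (ht : Odd t)
    (htF : ∀ p, p.Prime → p ∣ t → p ∣ Nat.card Fˣ) (u : Fˣ) :
    Irreducible (X ^ t - C (u : F)) ↔
      ∀ p, p.Prime → p ∣ t → (Nat.card Fˣ).factorization p ≤ (orderOf u).factorization p := by
  rw [X_pow_sub_C_irreducible_iff_forall_prime_of_odd ht]
  refine forall_congr' fun p => forall_congr' fun hp => forall_congr' fun hpt => ?_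
  have hroot : (∃ b : F, b ^ p = u) ↔ ∃ v : Fˣ, v ^ p = u :=
    ⟨fun ⟨b, hb⟩ => ⟨Units.mk0 b (ne_zero_pow hp.ne_zero (hb ▸ u.ne_zero)), Units.ext hb⟩,
      fun ⟨v, hv⟩ => ⟨v, by rw [← Units.val_pow_eq_pow_val, hv]⟩⟩
  rw [← not_lt, ← Nat.dvd_div_prime_iff_factorization_lt hp (htF p hp hpt) Nat.card_pos.ne'
    (orderOf_dvd_natCard u), orderOf_dvd_iff_pow_eq_one,
    ← IsCyclic.exists_pow_eq_iff (htF p hp hpt), ← hroot, not_exists]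

theorem irreducible_X_pow_sub_C_and_dvd_iff {t n : ℕ} (ht : Odd t) (hn : n ≠ 0) (htn : t ∣ n)
    (htF : ∀ p, p.Prime → p ∣ t → p ∣ Nat.card Fˣ)
    (hval : ∀ p, p.Prime → p ∣ t → (Nat.card Fˣ).factorization p ≤ (n / t).factorization p)
    (u : Fˣ) :
    (Irreducible (X ^ t - C (u : F)) ∧ X ^ t - C (u : F) ∣ X ^ n - 1) ↔
      orderOf u ∣ n.gcd (Nat.card Fˣ) ∧ Nat.primePart t (n.gcd (Nat.card Fˣ)) ∣ orderOf u := by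
  have hN : Nat.card Fˣ ≠ 0 := Nat.card_pos.ne'
  have hgcd := Nat.gcd_div_eq_gcd hn hN htn hval
  have hdvd : X ^ t - C (u : F) ∣ X ^ n - 1 ↔ orderOf u ∣ n.gcd (Nat.card Fˣ) := by
    rw [X_pow_sub_C_dvd_X_pow_sub_one_iff htn ht.pos.ne', ← Units.val_pow_eq_pow_val,
      Units.val_eq_one, ← orderOf_dvd_iff_pow_eq_one, ← hgcd, Nat.dvd_gcd_iff,
      and_iff_left (orderOf_dvd_natCard u)]
  have hirr : Irreducible (X ^ t - C (u : F)) ↔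
      Nat.primePart t (n.gcd (Nat.card Fˣ)) ∣ orderOf u := by
    rw [irreducible_X_pow_sub_C_iff ht htF u, Nat.primePart_dvd_iff (orderOf_pos u).ne', ← hgcd]
    refine forall₃_congr fun p hp hpt => ?_
    rw [Nat.factorization_gcd ((Nat.div_ne_zero_iff_of_dvd htn).2 ⟨hn, ht.pos.ne'⟩) hN,
      Finsupp.inf_apply, min_eq_right (hval p hp hpt)]
  rw [hirr, hdvd, and_comm]

end FiniteField

theorem count_irreducible_binomials_degree_t_general {F : Type*} [Field F] [Fintype F]
    (q : ℕ) (hq : q = Fintype.card F) (n : ℕ) (hn : 0 < n)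
    (h3 : (∏ p ∈ n.primeFactors, p) ∣ (q - 1))
    (m : ℕ) (hm : m = n / Nat.gcd n (q ^ 2 - 1)) :
    ∀ t, t ∣ m → Odd t →
      (({f : Polynomial F | f.Monic ∧ Irreducible f ∧ f ∣ (X ^ n - 1 : Polynomial F) ∧
            f.natDegree = t ∧ ∃ a : F, a ≠ 0 ∧ f = X ^ t - C a}.ncard : ℚ)
        = (Nat.totient t : ℚ) / (t : ℚ) * (Nat.gcd n (q - 1) : ℚ)) := by
  intro t htm hto
  have hcard : Nat.card Fˣ = q - 1 := by rw [Nat.card_units, Nat.card_eq_fintype_card, hq]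
  have hq1 : q - 1 ≠ 0 := hcard ▸ Nat.card_pos.ne'
  have hq21 : q ^ 2 - 1 ≠ 0 := Nat.sub_ne_zero_of_lt (Nat.one_lt_pow two_ne_zero (by omega))
  have ht : t ≠ 0 := hto.pos.ne'
  have htn : t ∣ n := htm.trans (hm ▸ Nat.div_dvd_of_dvd (Nat.gcd_dvd_left _ _))
  have htq : ∀ p, p.Prime → p ∣ t → p ∣ q - 1 := fun p hp hpt =>
    (dvd_prod_of_mem id (Nat.mem_primeFactors.2 ⟨hp, hpt.trans htn, hn.ne'⟩)).trans h3
  have hval : ∀ p, p.Prime → p ∣ t → (q - 1).factorization p ≤ (n / t).factorization p :=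
    fun p hp hpt => Nat.factorization_le_factorization_div_of_dvd_div_gcd hn.ne' hq21
      (Nat.sub_one_dvd_pow_sub_one q 2) (hm ▸ htm) hp hpt
  have htd : ∀ p, p.Prime → p ∣ t → p ∣ n.gcd (q - 1) := fun p hp hpt =>
    Nat.dvd_gcd (hpt.trans htn) (htq p hp hpt)
  rw [ncard_setOf_binomial_factors ht]
  simp only [FiniteField.irreducible_X_pow_sub_C_and_dvd_iff hto hn.ne' htn (hcard ▸ htq)
    (hcard ▸ hval), hcard]
  rw [IsCyclic.ncard_setOf_orderOf_dvd_and_dvd_orderOf (hcard ▸ Nat.gcd_dvd_right n (q - 1))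
      (Nat.primePart_dvd t _) (Nat.coprime_primePart_div t _), Nat.cast_mul,
    Nat.cast_div (Nat.primePart_dvd t _) (Nat.cast_ne_zero.2 (Nat.primePart_ne_zero t _)),
    ← Nat.totient_div_eq_of_primeFactors_eq (Nat.primePart_ne_zero t _) ht
      (Nat.primeFactors_primePart ht (Nat.gcd_ne_zero_right hq1) htd)]
  ring

/-- If `q ≡ 3 (mod 4)`, `8 ∣ n` and `rad(n) ∣ q - 1`, then for each odd divisor `t` of
`m = n / gcd(n, q² - 1)`, the number of distinct monic irreducible binomial factors
`x^t - a` of `x^n - 1` over `F_q` of degree `t` is `(φ(t)/t)·gcd(n, q - 1)`. -/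
theorem count_irreducible_binomials_degree_t {F : Type*} [Field F] [Fintype F]
    (q : ℕ) (hq : q = Fintype.card F) (n : ℕ) (hn : 0 < n)
    (h1 : q % 4 = 3) (h2 : 8 ∣ n)
    (h3 : (∏ p ∈ n.primeFactors, p) ∣ (q - 1))
    (m : ℕ) (hm : m = n / Nat.gcd n (q ^ 2 - 1)) :
    ∀ t, t ∣ m → Odd t →
      (({f : Polynomial F | f.Monic ∧ Irreducible f ∧ f ∣ (X ^ n - 1 : Polynomial F) ∧
            f.natDegree = t ∧ ∃ a : F, a ≠ 0 ∧ f = X ^ t - C a}.ncard : ℚ)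
        = (Nat.totient t : ℚ) / (t : ℚ) * (Nat.gcd n (q - 1) : ℚ)) :=
  count_irreducible_binomials_degree_t_general q hq n hn h3 m hm
end

section
/- Let F_q be a finite field and n a positive integer with q ≡ 3 (mod 4), 8 | n, and rad(n) dividing q − 1. Set m = n/gcd(n, q² − 1). Then for each odd divisor t of m, the number of distinct monic irreducible factors of x^n − 1 in F_q[x] of degree 2t that are binomials (i.e. of the form x^{2t} − a with a ∈ F_q^*) equals (φ(t)/(2t)) · gcd(n, q − 1). -/
/-!
Put `g = gcd(n, q - 1)`. The hypotheses give `2t·g ∣ n`, so `x^{2t} - a` divides `x^n - 1` exactly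
when `a^{n/2t} = 1`, i.e. `a^g = 1`, i.e. `a = ω^j` with `ω = ζ^{(q-1)/g}` for a generator `ζ` of
`F_q^*` and `j < g`. Since `4 ∤ 2t`, Capelli's criterion says `x^{2t} - a` is irreducible iff `a` is
not a `p`-th power for any prime `p ∣ 2t`. Every such `p` divides `g` but not `(q - 1)/g`, so `ω^j`
is a `p`-th power iff `p ∣ j`. Hence the count is `#{j < g | gcd(j, 2t) = 1} = g·φ(2t)/(2t)`, and
`φ(2t) = φ(t)`.
-/

open Polynomial IntermediateField Finset

namespace Nat

theorem coprime_iff_forall_prime_dvd_not_dvd {k j : ℕ} :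
    k.Coprime j ↔ ∀ p : ℕ, p.Prime → p ∣ k → ¬ p ∣ j :=
  ⟨fun h p hp hpk hpj ↦ Prime.not_coprime_iff_dvd.2 ⟨p, hp, hpk, hpj⟩ h, coprime_of_dvd⟩

theorem card_filter_range_mul_coprime (r c : ℕ) : #{j ∈ range (c * r) | r.Coprime j} = c * φ r := by
  induction c with
  | zero => simp
  | succ c ih =>
    rw [add_one_mul, range_eq_Ico, ← Ico_union_Ico_eq_Ico (zero_le _) (le_add_right _ _),
      filter_union, card_union_of_disjoint
        (disjoint_filter_filter (Ico_disjoint_Ico_consecutive _ _ _)),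
      ← range_eq_Ico, ih, filter_coprime_Ico_eq_totient, add_one_mul]

theorem mul_card_filter_range_coprime {k g : ℕ} (hk : ∀ p : ℕ, p.Prime → p ∣ k → p ∣ g) :
    k * #{j ∈ range g | k.Coprime j} = g * φ k := by
  rcases eq_or_ne k 0 with rfl | hk0
  · simp
  set r := ∏ p ∈ k.primeFactors, p
  have hrk : r ∣ k := prod_primeFactors_dvd k
  have hrg : r ∣ g := prod_primes_dvd g (fun p hp ↦ (prime_of_mem_primeFactors hp).prime)
    fun p hp ↦ hk p (prime_of_mem_primeFactors hp) (dvd_of_mem_primeFactors hp)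
  have hcop : ∀ j, k.Coprime j ↔ r.Coprime j := fun j ↦ by
    simp_rw [coprime_iff_forall_prime_dvd_not_dvd]
    refine forall₂_congr fun p hp ↦ imp_congr_left ⟨fun hpk ↦ ?_, fun hpr ↦ hpr.trans hrk⟩
    exact dvd_prod_of_mem _ (mem_primeFactors.2 ⟨hp, hpk, hk0⟩)
  have hφ : φ k = k / r * φ r := by
    rw [totient_eq_div_primeFactors_mul k, totient_eq_div_primeFactors_mul r,
      primeFactors_prod_primeFactors, Nat.div_self (pos_of_dvd_of_pos hrk (pos_of_ne_zero hk0)),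
      one_mul]
  rw [filter_congr fun j _ ↦ hcop j, ← Nat.div_mul_cancel hrg, card_filter_range_mul_coprime,
    Nat.div_mul_cancel hrg, hφ]
  calc k * (g / r * φ r) = k * g / r * φ r := by rw [Nat.mul_div_assoc k hrg, mul_assoc]
    _ = g * (k / r * φ r) := by rw [mul_comm k g, Nat.mul_div_assoc g hrk, mul_assoc]

theorem coprime_div_gcd_of_mul_gcd_dvd {k n N : ℕ} (hN : N ≠ 0) (h : k * n.gcd N ∣ n) :
    k.Coprime (N / n.gcd N) := by
  refine coprime_of_dvd fun p hp hpk hpN ↦ ?_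
  have hg : 0 < n.gcd N := gcd_pos_of_pos_right n (pos_of_ne_zero hN)
  have : p * n.gcd N ∣ n.gcd N :=
    dvd_gcd ((mul_dvd_mul_right hpk _).trans h)
      (mul_comm p _ ▸ mul_dvd_of_dvd_div (gcd_dvd_right n N) hpN)
  nth_rw 2 [← one_mul (n.gcd N)] at this
  exact hp.not_dvd_one (Nat.dvd_of_mul_dvd_mul_right hg this)

theorem two_mul_mul_gcd_dvd {q n t : ℕ} (hq : q % 4 = 3) (hn : 4 ∣ n)
    (ht : t ∣ n / n.gcd (q ^ 2 - 1)) : 2 * t * n.gcd (q - 1) ∣ n := by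
  set g := n.gcd (q - 1)
  have hg4 : g % 4 = 2 := by
    have h2g : 2 ∣ g := dvd_gcd ((by norm_num : 2 ∣ 4).trans hn) (by omega)
    have h4g : ¬ 4 ∣ g := fun h ↦ by have := h.trans (gcd_dvd_right n (q - 1)); omega
    omega
  have hlcm : lcm g 4 = 2 * g := by
    have := gcd_mul_lcm g 4
    rw [gcd_comm, gcd_rec, hg4] at this
    norm_num at this
    omega
  have h2gn : 2 * g ∣ n := hlcm ▸ lcm_dvd (gcd_dvd_left n (q - 1)) hn
  have h2gq : 2 * g ∣ q ^ 2 - 1 := by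
    rw [← one_pow 2, sq_sub_sq, mul_comm 2 g, mul_comm (q + 1)]
    exact mul_dvd_mul (gcd_dvd_right n (q - 1)) (by omega)
  calc 2 * t * g = t * (2 * g) := by ring
    _ ∣ n / n.gcd (q ^ 2 - 1) * n.gcd (q ^ 2 - 1) := mul_dvd_mul ht (dvd_gcd h2gn h2gq)
    _ = n := Nat.div_mul_cancel (gcd_dvd_left n _)

end Nat

section Binomials

variable {K : Type*} [Field K]

theorem X_pow_two_mul_sub_C_irreducible_of_odd {t : ℕ} (ht : Odd t) {a : K}
    (ha : ∀ p : ℕ, p.Prime → p ∣ 2 * t → ∀ b : K, b ^ p ≠ a) :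
    Irreducible (X ^ (2 * t) - C a) := by
  rw [mul_comm]
  apply X_pow_mul_sub_C_irreducible
    (X_pow_sub_C_irreducible_of_prime Nat.prime_two (ha 2 Nat.prime_two (dvd_mul_right 2 t)))
  intro E _ _ x hx
  have hint : IsIntegral K x := not_not.mp fun h ↦ by
    simpa only [degree_zero, degree_X_pow_sub_C two_pos, WithBot.natCast_ne_bot]
      using congr_arg degree (hx.symm.trans (dif_neg h))
  apply X_pow_sub_C_irreducible_of_odd ht
  intro p hp hpt b hb
  have hp_odd : Odd p := ht.of_dvd_nat hpt
  -- the norm of a `p`-th root of `√a` would be a `p`-th root of `a`, since `p` is odd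
  apply ha p hp (hpt.mul_left 2) (-Algebra.norm K b)
  rw [hp_odd.neg_pow, ← map_pow, hb, ← adjoin.powerBasis_gen hint,
    Algebra.PowerBasis.norm_gen_eq_coeff_zero_minpoly]
  simp [minpoly_gen, hx]

theorem X_pow_two_mul_sub_C_irreducible_iff_of_odd {t : ℕ} (ht : Odd t) {a : K} :
    Irreducible (X ^ (2 * t) - C a) ↔ ∀ p : ℕ, p.Prime → p ∣ 2 * t → ∀ b : K, b ^ p ≠ a :=
  ⟨fun h _ hp hpt ↦ pow_ne_of_irreducible_X_pow_sub_C h hpt hp.ne_one,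
    X_pow_two_mul_sub_C_irreducible_of_odd ht⟩

theorem X_pow_sub_C_dvd_X_pow_mul_sub_one_iff {k : ℕ} (hk : k ≠ 0) (s : ℕ) (a : K) :
    X ^ k - C a ∣ (X ^ (k * s) - 1 : K[X]) ↔ a ^ s = 1 := by
  have hsplit : (X ^ (k * s) - 1 : K[X]) = ((X ^ k) ^ s - C a ^ s) + C (a ^ s - 1) := by
    rw [map_sub, map_pow, map_one, pow_mul]; ring
  rw [hsplit, dvd_add_right (sub_dvd_pow_sub_pow _ _ s)]
  refine ⟨fun h ↦ ?_, fun h ↦ by simp [h]⟩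
  by_contra hne
  have h0 : a ^ s - 1 ≠ 0 := sub_ne_zero.mpr hne
  have := natDegree_le_of_dvd h (C_ne_zero.mpr h0)
  rw [natDegree_C, natDegree_X_pow_sub_C] at this
  exact hk (Nat.le_zero.mp this)

theorem setOf_irreducible_binomial_dvd_X_pow_sub_one_eq_image {t n : ℕ} (ht : Odd t)
    (htn : 2 * t ∣ n) :
    {f : K[X] | f.Monic ∧ Irreducible f ∧ f ∣ X ^ n - 1 ∧ f.natDegree = 2 * t ∧
        ∃ a : K, a ≠ 0 ∧ f = X ^ (2 * t) - C a} =
      (fun a ↦ X ^ (2 * t) - C a) ''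
        {a | a ^ (n / (2 * t)) = 1 ∧ ∀ p : ℕ, p.Prime → p ∣ 2 * t → ∀ b : K, b ^ p ≠ a} := by
  have hk : 2 * t ≠ 0 := mul_ne_zero two_ne_zero ht.pos.ne'
  obtain ⟨s, rfl⟩ := htn
  rw [Nat.mul_div_cancel_left s (Nat.pos_of_ne_zero hk)]
  ext f
  constructor
  · rintro ⟨-, hirr, hdvd, -, a, -, rfl⟩
    exact ⟨a, ⟨(X_pow_sub_C_dvd_X_pow_mul_sub_one_iff hk _ a).1 hdvd,
      (X_pow_two_mul_sub_C_irreducible_iff_of_odd ht).1 hirr⟩, rfl⟩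
  · rintro ⟨a, ⟨has, hnot_pow⟩, rfl⟩
    have ha : a ≠ 0 := fun h ↦ hnot_pow 2 Nat.prime_two (dvd_mul_right 2 t) 0 (by simp [h])
    exact ⟨monic_X_pow_sub_C a hk, (X_pow_two_mul_sub_C_irreducible_iff_of_odd ht).2 hnot_pow,
      (X_pow_sub_C_dvd_X_pow_mul_sub_one_iff hk _ a).2 has, natDegree_X_pow_sub_C, a, ha, rfl⟩

end Binomials

section FiniteField

variable {F : Type*} [Field F] [Fintype F]

theorem pow_eq_one_iff_pow_gcd_card_sub_one_eq_one {s : ℕ} (hs : s ≠ 0) (a : F) :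
    a ^ s = 1 ↔ a ^ s.gcd (Fintype.card F - 1) = 1 := by
  rw [pow_gcd_eq_one, iff_self_and]
  intro has
  exact FiniteField.pow_card_sub_one_eq_one a (by rintro rfl; simp [hs] at has)

theorem exists_isPrimitiveRoot_card_sub_one : ∃ ζ : F, IsPrimitiveRoot ζ (Fintype.card F - 1) := by
  classical
  obtain ⟨ζ, hζ⟩ := IsCyclic.exists_ofOrder_eq_natCard (α := Fˣ)
  refine ⟨ζ, IsPrimitiveRoot.coe_units_iff.2 (IsPrimitiveRoot.iff_orderOf.2 ?_)⟩
  rw [hζ, Nat.card_eq_fintype_card, Fintype.card_units]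

theorem IsPrimitiveRoot.exists_pow_eq_pow_iff_dvd {ζ : F}
    (hζ : IsPrimitiveRoot ζ (Fintype.card F - 1)) {p : ℕ} (hp : p ∣ Fintype.card F - 1) (i : ℕ) :
    (∃ b : F, b ^ p = ζ ^ i) ↔ p ∣ i := by
  refine ⟨fun ⟨b, hb⟩ ↦ ?_, fun ⟨j, hj⟩ ↦ ⟨ζ ^ j, by rw [← pow_mul, mul_comm, hj]⟩⟩
  obtain ⟨c, hc⟩ := hp
  have hc0 : p * c ≠ 0 := hc ▸ by have := Fintype.one_lt_card (α := F); omega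
  have hb0 : b ≠ 0 := by
    rintro rfl
    exact pow_ne_zero i (hζ.ne_zero (hc ▸ hc0)) (by rw [← hb, zero_pow (left_ne_zero_of_mul hc0)])
  -- raising `b ^ p = ζ ^ i` to the power `(q - 1) / p` gives `ζ ^ (i * ((q - 1) / p)) = 1`
  have h1 : ζ ^ (i * c) = 1 := by
    rw [pow_mul, ← hb, ← pow_mul, ← hc, FiniteField.pow_card_sub_one_eq_one b hb0]
  rw [hζ.pow_eq_one_iff_dvd, hc] at h1
  exact Nat.dvd_of_mul_dvd_mul_right (Nat.pos_of_ne_zero (right_ne_zero_of_mul hc0)) h1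

theorem ncard_setOf_pow_eq_one_forall_not_pow {g k : ℕ} (hg : g ∣ Fintype.card F - 1)
    (hk : ∀ p : ℕ, p.Prime → p ∣ k → p ∣ g) (hkc : k.Coprime ((Fintype.card F - 1) / g)) :
    {a : F | a ^ g = 1 ∧ ∀ p : ℕ, p.Prime → p ∣ k → ∀ b : F, b ^ p ≠ a}.ncard =
      #{j ∈ range g | k.Coprime j} := by
  obtain ⟨ζ, hζ⟩ := exists_isPrimitiveRoot_card_sub_one (F := F)
  obtain ⟨c, hc⟩ := hg
  have hgc : g * c ≠ 0 := hc ▸ by have := Fintype.one_lt_card (α := F); omega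
  have : NeZero g := ⟨left_ne_zero_of_mul hgc⟩
  rw [hc, Nat.mul_div_cancel_left c (Nat.pos_of_ne_zero (NeZero.ne g))] at hkc
  have hω : IsPrimitiveRoot (ζ ^ c) g :=
    hζ.pow (Nat.pos_of_ne_zero (hc ▸ hgc)) (hc.trans (mul_comm g c))
  -- `(ζ ^ c) ^ j` has a `p`-th root iff `p ∣ c * j`, and `p ∤ c` for `p ∣ k`
  have hnot_pow : ∀ j, (∀ p : ℕ, p.Prime → p ∣ k → ∀ b : F, b ^ p ≠ (ζ ^ c) ^ j) ↔ k.Coprime j := by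
    intro j
    rw [Nat.coprime_iff_forall_prime_dvd_not_dvd]
    refine forall₃_congr fun p hp hpk ↦ ?_
    rw [← pow_mul, ← not_exists, hζ.exists_pow_eq_pow_iff_dvd (hc ▸ (hk p hp hpk).mul_right c),
      (Nat.Coprime.coprime_dvd_left hpk hkc).dvd_mul_left]
  have himage : {a : F | a ^ g = 1 ∧ ∀ p : ℕ, p.Prime → p ∣ k → ∀ b : F, b ^ p ≠ a} =
      (fun j ↦ (ζ ^ c) ^ j) '' ↑{j ∈ range g | k.Coprime j} := by
    ext a
    constructor
    · rintro ⟨ha, ha_not_pow⟩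
      obtain ⟨j, hj, rfl⟩ := hω.eq_pow_of_pow_eq_one ha
      exact ⟨j, by simpa [hj] using (hnot_pow j).1 ha_not_pow, rfl⟩
    · rintro ⟨j, hj, rfl⟩
      rw [coe_filter, Set.mem_ofPred_eq] at hj
      exact ⟨by rw [← pow_mul, mul_comm, pow_mul, hω.pow_eq_one, one_pow], (hnot_pow j).2 hj.2⟩
  rw [himage, Set.InjOn.ncard_image, Set.ncard_coe_finset]
  intro i hi j hj hij
  exact hω.pow_inj (mem_range.1 (mem_filter.1 hi).1) (mem_range.1 (mem_filter.1 hj).1) hij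

end FiniteField

/-- If `q ≡ 3 (mod 4)`, `8 ∣ n` and `rad(n) ∣ q - 1`, then for each odd divisor `t` of
`m = n / gcd(n, q² - 1)`, the number of distinct monic irreducible binomial factors
`x^{2t} - a` of `x^n - 1` over `F_q` of degree `2t` is `(φ(t)/(2t))·gcd(n, q - 1)`. -/
theorem count_irreducible_binomials_degree_two_t {F : Type*} [Field F] [Fintype F]
    (q : ℕ) (hq : q = Fintype.card F) (n : ℕ) (hn : 0 < n)
    (h1 : q % 4 = 3) (h2 : 8 ∣ n)
    (h3 : (∏ p ∈ n.primeFactors, p) ∣ (q - 1))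
    (m : ℕ) (hm : m = n / Nat.gcd n (q ^ 2 - 1)) :
    ∀ t, t ∣ m → Odd t →
      (({f : Polynomial F | f.Monic ∧ Irreducible f ∧ f ∣ (X ^ n - 1 : Polynomial F) ∧
            f.natDegree = 2 * t ∧ ∃ a : F, a ≠ 0 ∧ f = X ^ (2 * t) - C a}.ncard : ℚ)
        = (Nat.totient t : ℚ) / (2 * t : ℚ) * (Nat.gcd n (q - 1) : ℚ)) := by
  intro t htm ht
  subst hq
  set g := n.gcd (Fintype.card F - 1)
  have hkg : 2 * t * g ∣ n := Nat.two_mul_mul_gcd_dvd h1 ((by norm_num : 4 ∣ 8).trans h2) (hm ▸ htm)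
  have hkn : 2 * t ∣ n := dvd_of_mul_right_dvd hkg
  have hs : n / (2 * t) ≠ 0 := (Nat.div_pos (Nat.le_of_dvd hn hkn) (by have := ht.pos; omega)).ne'
  have hgcd : (n / (2 * t)).gcd (Fintype.card F - 1) = g :=
    Nat.dvd_antisymm (Nat.gcd_dvd_gcd_of_dvd_left _ (Nat.div_dvd_of_dvd hkn))
      (Nat.dvd_gcd ((Nat.dvd_div_iff_mul_dvd hkn).2 hkg) (Nat.gcd_dvd_right _ _))
  have hprime : ∀ p : ℕ, p.Prime → p ∣ 2 * t → p ∣ g := fun p hp hpk ↦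
    Nat.dvd_gcd (hpk.trans hkn)
      ((dvd_prod_of_mem _ (Nat.mem_primeFactors.2 ⟨hp, hpk.trans hkn, hn.ne'⟩)).trans h3)
  have hcount := Nat.mul_card_filter_range_coprime hprime
  rw [Nat.totient_mul (Nat.coprime_two_left.2 ht), Nat.totient_two, one_mul] at hcount
  rw [setOf_irreducible_binomial_dvd_X_pow_sub_one_eq_image ht hkn,
    Set.ncard_image_of_injective _ fun a b h ↦ C_injective (sub_right_injective h)]
  simp_rw [pow_eq_one_iff_pow_gcd_card_sub_one_eq_one hs, hgcd]
  rw [ncard_setOf_pow_eq_one_forall_not_pow (Nat.gcd_dvd_right _ _) hprime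
    (Nat.coprime_div_gcd_of_mul_gcd_dvd (by omega) hkg)]
  have ht0 : (t : ℚ) ≠ 0 := by exact_mod_cast ht.pos.ne'
  field_simp
  have hcountQ := congrArg (Nat.cast : ℕ → ℚ) hcount
  push_cast at hcountQ
  linear_combination hcountQ
end
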